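/- arXiv:1904.06012 — 6 statements merged into one kernel-verified Lean document; each statement's English description precedes it below -/
import Mathlib

section
/- Let (X₁,d₁) and (X₂,d₂) be metric spaces, let S₁ ⊆ S₂ ⊆ X₁, and suppose S₁ is K-connected in S₂. Let f : X₁ → X₂ be a function that is locally Lipschitz with constant c at every point of S₂. Then f is globally Lipschitz on S₁ with constant cK, i.e. d₂(f(x),f(y)) ≤ cK·d₁(x,y) for all x,y ∈ S₁. -/
open MeasureTheory Polynomial Filter
open scoped ENNReal NNReal InnerProductSpace

noncomputable section

/-- A function `f` between metric spaces is *locally Lipschitz with constant `c` at `x₀`*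
if for every `c' > c` there is a neighborhood of `x₀` on which `f` is `c'`-Lipschitz. -/
def LocallyLipschitzAtWith {X Y : Type*} [MetricSpace X] [MetricSpace Y]
    (f : X → Y) (c : ℝ) (x₀ : X) : Prop :=
  ∀ c' : ℝ, c < c' → ∃ U ∈ nhds x₀, ∀ x ∈ U, ∀ y ∈ U, dist (f x) (f y) ≤ c' * dist x y

/-- `S₁` is *`K`-connected in `S₂`* if any two distinct points of `S₁` are joined by a
rectifiable Jordan arc inside `S₂` of length at most `K` times their distance. -/
def IsKConnectedIn {X : Type*} [MetricSpace X] (K : ℝ) (S₁ S₂ : Set X) : Prop :=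
  ∀ x ∈ S₁, ∀ y ∈ S₁, x ≠ y → ∃ γ : ℝ → X,
    ContinuousOn γ (Set.Icc 0 1) ∧ Set.InjOn γ (Set.Icc 0 1) ∧
    γ 0 = x ∧ γ 1 = y ∧ Set.MapsTo γ (Set.Icc 0 1) S₂ ∧
    eVariationOn γ (Set.Icc 0 1) ≤ ENNReal.ofReal (K * dist x y)

/-- A matrix acting as a continuous linear map on Euclidean space. -/
def matCLM {n : ℕ} (A : Matrix (Fin n) (Fin n) ℝ) :
    EuclideanSpace ℝ (Fin n) →L[ℝ] EuclideanSpace ℝ (Fin n) :=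
  Matrix.toEuclideanCLM (𝕜 := ℝ) A

/-- The spectral (`ℓ² → ℓ²` operator) norm of a matrix. -/
def specNorm {n : ℕ} (A : Matrix (Fin n) (Fin n) ℝ) : ℝ := ‖matCLM A‖

/-- The Lanczos vectors `v_j(u)`:  `v₀ = u` and `v_{j+1}` is the normalized projection of
`A v_j` onto the orthogonal complement of `span {v₀, …, v_j}`. -/
def lanczosVec {n : ℕ} (A : Matrix (Fin n) (Fin n) ℝ) (u : EuclideanSpace ℝ (Fin n)) :
    ℕ → EuclideanSpace ℝ (Fin n)
  | 0 => u
  | j + 1 =>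
    let w := matCLM A (lanczosVec A u j) -
      (Submodule.orthogonalProjectionOnto
        (Submodule.span ℝ (Set.range fun i : Fin (j + 1) => lanczosVec A u i.1))
        (matCLM A (lanczosVec A u j)) : EuclideanSpace ℝ (Fin n))
    ‖w‖⁻¹ • w

/-- The projection of `A v_j` onto the orthogonal complement of `W_j = span {v₀, …, v_j}`. -/
def lanczosResidual {n : ℕ} (A : Matrix (Fin n) (Fin n) ℝ) (u : EuclideanSpace ℝ (Fin n))
    (j : ℕ) : EuclideanSpace ℝ (Fin n) :=
  matCLM A (lanczosVec A u j) -
    (Submodule.orthogonalProjectionOnto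
      (Submodule.span ℝ (Set.range fun i : Fin (j + 1) => lanczosVec A u i.1))
      (matCLM A (lanczosVec A u j)) : EuclideanSpace ℝ (Fin n))

/-- The Jacobi coefficient `α_j(u) = ⟨A v_j(u), v_j(u)⟩`. -/
def lanczosAlpha {n : ℕ} (A : Matrix (Fin n) (Fin n) ℝ) (u : EuclideanSpace ℝ (Fin n))
    (j : ℕ) : ℝ :=
  ⟪matCLM A (lanczosVec A u j), lanczosVec A u j⟫_ℝ

/-- The Jacobi coefficient `β_j(u) = ‖Proj_{W_j^⊥} (A v_j(u))‖`. -/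
def lanczosBeta {n : ℕ} (A : Matrix (Fin n) (Fin n) ℝ) (u : EuclideanSpace ℝ (Fin n))
    (j : ℕ) : ℝ :=
  ‖lanczosResidual A u j‖

/-- `γ_j(u) = (∏_{i=0}^{j-1} β_i(u))⁻¹`, the leading coefficient of the `j`-th orthonormal
polynomial of the spectral measure `μ^u`. -/
def lanczosGamma {n : ℕ} (A : Matrix (Fin n) (Fin n) ℝ) (u : EuclideanSpace ℝ (Fin n))
    (j : ℕ) : ℝ :=
  (∏ i ∈ Finset.range j, lanczosBeta A u i)⁻¹

/-- The `k × k` symmetric tridiagonal matrix with diagonal `a 0, …, a (k-1)` and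
sub/superdiagonal `b 0, …, b (k-2)`. -/
def jacobiMatrixOf (a b : ℕ → ℝ) (k : ℕ) : Matrix (Fin k) (Fin k) ℝ :=
  Matrix.of fun i j =>
    if (i : ℕ) = (j : ℕ) then a i
    else if (i : ℕ) + 1 = (j : ℕ) then b i
    else if (j : ℕ) + 1 = (i : ℕ) then b j
    else 0

/-- The Jacobi matrix output by `k` iterations of the Lanczos algorithm on input `(A, u)`. -/
def lanczosJacobi {n : ℕ} (A : Matrix (Fin n) (Fin n) ℝ) (u : EuclideanSpace ℝ (Fin n))
    (k : ℕ) : Matrix (Fin k) (Fin k) ℝ :=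
  jacobiMatrixOf (lanczosAlpha A u) (lanczosBeta A u) k

/-- The list of roots of the characteristic polynomial of `M` (the eigenvalues, with
multiplicity, for symmetric `M`), in decreasing order. -/
def descEigs {k : ℕ} (M : Matrix (Fin k) (Fin k) ℝ) : List ℝ :=
  (M.charpoly.roots.sort (· ≤ ·)).reverse

/-- A finite family `lam : Fin n → ℝ` is `(δ, ω, j)`-equidistributed if for every finite set `T`
of at most `j` real numbers, at least `δ·n` of the points `lam i` satisfy
`∏_{t ∈ T} |lam i - t| ≥ ω^|T|` (equivalently, `(1/|T|) ∑_{t∈T} log |lam i - t| ≥ log ω`). -/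
def EquidistributedTuple (n : ℕ) (lam : Fin n → ℝ) (δ ω : ℝ) (j : ℕ) : Prop :=
  ∀ T : Finset ℝ, T.Nonempty → T.card ≤ j →
    δ * n ≤ ((Finset.univ.filter fun i => ω ^ T.card ≤ ∏ t ∈ T, |lam i - t|).card : ℝ)

/-- A measure `μ` on `ℝ` is `(δ, ω, j)`-equidistributed if for every finite set `T`
of at most `j` real numbers, `μ {x : ∏_{t ∈ T} |x - t| ≥ ω^|T|} ≥ δ`. -/
def EquidistributedMeasure (μ : Measure ℝ) (δ ω : ℝ) (j : ℕ) : Prop :=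
  ∀ T : Finset ℝ, T.Nonempty → T.card ≤ j →
    ENNReal.ofReal δ ≤ μ {x : ℝ | ω ^ T.card ≤ ∏ t ∈ T, |x - t|}

/-- The Kolmogorov distance between two measures on `ℝ`. -/
def kolDist (μ ν : Measure ℝ) : ℝ :=
  ⨆ t : ℝ, |(μ (Set.Iic t)).toReal - (ν (Set.Iic t)).toReal|

/-- The set `I_n(δ, ε)` of `(δ, ε)`-incompressible unit vectors: unit vectors such that every
set of at least `δ·n` coordinates carries more than `ε` of the `ℓ²` mass. -/
def sphereIncompressible (n : ℕ) (δ ε : ℝ) : Set (EuclideanSpace ℝ (Fin n)) :=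
  {u | ‖u‖ = 1 ∧ ∀ S : Finset (Fin n), δ * n ≤ (S.card : ℝ) → ε < ∑ i ∈ S, (u i) ^ 2}

/-- `σ` is the uniform probability measure on the unit sphere of `ℝⁿ`: the (unique)
rotation-invariant probability measure supported on the sphere. -/
def IsUniformOnSphere {n : ℕ} (σ : Measure (EuclideanSpace ℝ (Fin n))) : Prop :=
  IsProbabilityMeasure σ ∧ σ {u : EuclideanSpace ℝ (Fin n) | ‖u‖ = 1} = 1 ∧
    ∀ e : EuclideanSpace ℝ (Fin n) ≃ₗᵢ[ℝ] EuclideanSpace ℝ (Fin n), σ.map e = σ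

/-- `m` is a median of the real random variable `f` under the measure `σ`. -/
def IsMedian {Ω : Type*} [MeasurableSpace Ω] (σ : Measure Ω) (f : Ω → ℝ) (m : ℝ) : Prop :=
  2⁻¹ ≤ σ {x | f x ≤ m} ∧ 2⁻¹ ≤ σ {x | m ≤ f x}

/-- The empirical spectral distribution `(1/n) ∑ δ_{lam i}`. -/
def esd (n : ℕ) (lam : Fin n → ℝ) : Measure ℝ :=
  ((n : ℝ≥0∞))⁻¹ • ∑ i : Fin n, Measure.dirac (lam i)

/-- The spectral measure `μ^u = ∑ w_i² δ_{lam i}`. -/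
def vectorSpectralMeasure (n : ℕ) (lam : Fin n → ℝ) (w : Fin n → ℝ) : Measure ℝ :=
  ∑ i : Fin n, (ENNReal.ofReal ((w i) ^ 2)) • Measure.dirac (lam i)

/-- The `k`-th moment of a measure on `ℝ`. -/
def mom (μ : Measure ℝ) (k : ℕ) : ℝ := ∫ x, x ^ k ∂μ

/-- The `(k+1) × (k+1)` Hankel matrix of moments of `μ`. -/
def hankel (μ : Measure ℝ) (k : ℕ) : Matrix (Fin (k + 1)) (Fin (k + 1)) ℝ :=
  Matrix.of fun i j => mom μ ((i : ℕ) + (j : ℕ))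

/-- `D_k`, the Hankel determinant of `μ`. -/
def hankelDet (μ : Measure ℝ) (k : ℕ) : ℝ := (hankel μ k).det

/-- `D_{k-1}`, with the convention `D_{-1} = 1`. -/
def hankelDetPred (μ : Measure ℝ) : ℕ → ℝ
  | 0 => 1
  | k + 1 => hankelDet μ k

/-- The `k`-th orthonormal polynomial of `μ`, evaluated at `x`, via the determinantal formula
`p_k(x) = det M̃_k(x) / √(D_{k-1} D_k)`. -/
def orthoPolyEval (μ : Measure ℝ) (k : ℕ) (x : ℝ) : ℝ :=
  (Matrix.of fun i j : Fin (k + 1) =>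
      if (i : ℕ) = k then x ^ (j : ℕ) else mom μ ((i : ℕ) + (j : ℕ))).det /
    Real.sqrt (hankelDetPred μ k * hankelDet μ k)

/-- The Jacobi coefficient `α_k` of the measure `μ`:  `α_k = ∫ x p_k(x)² dμ(x)`. -/
def measJacobiAlpha (μ : Measure ℝ) (k : ℕ) : ℝ := ∫ x, x * (orthoPolyEval μ k x) ^ 2 ∂μ

/-- The Jacobi coefficient `β_k` of the measure `μ`:  `β_k = √(D_{k-1} D_{k+1}) / D_k`. -/
def measJacobiBeta (μ : Measure ℝ) (k : ℕ) : ℝ :=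
  Real.sqrt (hankelDetPred μ k * hankelDet μ (k + 1)) / hankelDet μ k

/-- The `k`-th Jacobi matrix of the measure `μ`. -/
def measJacobi (μ : Measure ℝ) (k : ℕ) : Matrix (Fin k) (Fin k) ℝ :=
  jacobiMatrixOf (measJacobiAlpha μ) (measJacobiBeta μ) k

end

theorem local_to_global_lipschitz_aux {X₁ X₂ : Type*} [MetricSpace X₁] [MetricSpace X₂]
    (S₂ : Set X₁) (K c : ℝ) (f : X₁ → X₂)
    (hloc : ∀ x₀ ∈ S₂, LocallyLipschitzAtWith f c x₀)
    (x y : X₁) (γ : ℝ → X₁)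
    (hγc : ContinuousOn γ (Set.Icc 0 1)) (hγ0 : γ 0 = x) (hγ1 : γ 1 = y)
    (hγm : Set.MapsTo γ (Set.Icc 0 1) S₂)
    (hγv : eVariationOn γ (Set.Icc 0 1) ≤ ENNReal.ofReal (K * dist x y))
    (hKd : 0 ≤ K * dist x y)
    (c' : ℝ) (hc' : c < c') :
    ∃ S : ℝ, dist (f x) (f y) ≤ c' * S ∧ dist x y ≤ S ∧ S ≤ K * dist x y := by
  have h1 : ∀ t : Set.Icc (0:ℝ) 1, ∃ O : Set ℝ, IsOpen O ∧ (t:ℝ) ∈ O ∧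
      ∀ s ∈ O ∩ Set.Icc (0:ℝ) 1, ∀ s' ∈ O ∩ Set.Icc (0:ℝ) 1,
        dist (f (γ s)) (f (γ s')) ≤ c' * dist (γ s) (γ s') := by
    intro t
    obtain ⟨U, hU, hUP⟩ := hloc (γ t) (hγm t.2) c' hc'
    obtain ⟨O, hOopen, htO, hOsub⟩ := mem_nhdsWithin.1 ((hγc t t.2) hU)
    exact ⟨O, hOopen, htO, fun s hs s' hs' => hUP _ (hOsub hs) _ (hOsub hs')⟩
  choose O hOopen hmemO hP using h1
  have hcov : Set.Icc (0:ℝ) 1 ⊆ ⋃ t : Set.Icc (0:ℝ) 1, O t := fun s hs =>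
    Set.mem_iUnion.2 ⟨⟨s, hs⟩, hmemO _⟩
  obtain ⟨δ, hδ, hball⟩ := lebesgue_number_lemma_of_metric isCompact_Icc hOopen hcov
  obtain ⟨m, hm⟩ := exists_nat_one_div_lt hδ
  set n := m + 1 with hn
  have hn0 : (0:ℝ) < n := by positivity
  have hstep : (1:ℝ)/n < δ := by exact_mod_cast hm
  have hmem : ∀ i : ℕ, i ≤ n → ((i:ℝ) / n) ∈ Set.Icc (0:ℝ) 1 := by
    intro i hi
    constructor
    · positivity
    · rw [div_le_one hn0]; exact_mod_cast hi
  have hpiece : ∀ i : ℕ, i < n →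
      dist (f (γ ((i:ℝ)/n))) (f (γ (((i:ℝ)+1)/n))) ≤
        c' * dist (γ ((i:ℝ)/n)) (γ (((i:ℝ)+1)/n)) := by
    intro i hi
    obtain ⟨j, hj⟩ := hball ((i:ℝ)/n) (hmem i hi.le)
    have h1 : ((i:ℝ)/n) ∈ Metric.ball ((i:ℝ)/n) δ := Metric.mem_ball_self hδ
    have h2 : (((i:ℝ)+1)/n) ∈ Metric.ball ((i:ℝ)/n) δ := by
      rw [Metric.mem_ball, Real.dist_eq]
      have he : ((i:ℝ)+1)/n - (i:ℝ)/n = 1/n := by ring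
      rw [he, abs_of_pos (by positivity)]
      exact hstep
    have hi1 : (((i:ℝ)+1)/n) ∈ Set.Icc (0:ℝ) 1 := by
      exact_mod_cast hmem (i+1) hi
    exact hP j _ ⟨hj h1, hmem i hi.le⟩ _ ⟨hj h2, hi1⟩
  refine ⟨∑ i ∈ Finset.range n, dist (γ ((i:ℝ)/n)) (γ (((i:ℝ)+1)/n)), ?_, ?_, ?_⟩
  · have ht : dist (f (γ ((0:ℕ)/n : ℝ))) (f (γ ((n:ℕ)/n : ℝ))) ≤
        ∑ i ∈ Finset.range n, dist (f (γ ((i:ℝ)/n))) (f (γ (((i:ℝ)+1)/n))) := by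
      have := dist_le_range_sum_dist (fun i : ℕ => f (γ ((i:ℝ)/n))) n
      simpa using this
    have h0 : ((0:ℕ):ℝ)/n = 0 := by simp
    have h1 : ((n:ℕ):ℝ)/n = 1 := by field_simp
    rw [h0, h1, hγ0, hγ1] at ht
    calc dist (f x) (f y) ≤ _ := ht
      _ ≤ ∑ i ∈ Finset.range n, c' * dist (γ ((i:ℝ)/n)) (γ (((i:ℝ)+1)/n)) :=
        Finset.sum_le_sum fun i hi => hpiece i (Finset.mem_range.1 hi)
      _ = _ := by rw [Finset.mul_sum]
  · have ht := dist_le_range_sum_dist (fun i : ℕ => γ ((i:ℝ)/n)) n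
    have h0 : ((0:ℕ):ℝ)/n = 0 := by simp
    have h1 : ((n:ℕ):ℝ)/n = 1 := by field_simp
    rw [h0, h1, hγ0, hγ1] at ht
    simpa using ht
  · set u : ℕ → ℝ := fun i => min ((i:ℝ)/n) 1 with hu
    have humono : Monotone u := fun i j hij =>
      min_le_min ((div_le_div_iff_of_pos_right hn0).2 (by exact_mod_cast hij)) le_rfl
    have humem : ∀ i, u i ∈ Set.Icc (0:ℝ) 1 :=
      fun i => ⟨le_min (by positivity) zero_le_one, min_le_right _ _⟩
    have hsum := eVariationOn.sum_le (f := γ) (n := n) humono humem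
    have hueq : ∀ i : ℕ, i ≤ n → u i = (i:ℝ)/n := by
      intro i hi
      exact min_eq_left (by rw [div_le_one hn0]; exact_mod_cast hi)
    have hconv : ENNReal.ofReal (∑ i ∈ Finset.range n,
        dist (γ ((i:ℝ)/n)) (γ (((i:ℝ)+1)/n))) ≤ ENNReal.ofReal (K * dist x y) := by
      rw [ENNReal.ofReal_sum_of_nonneg (fun i _ => dist_nonneg)]
      refine le_trans (le_trans (le_of_eq ?_) hsum) hγv
      refine Finset.sum_congr rfl fun i hi => ?_
      have hi' := Finset.mem_range.1 hi
      rw [hueq i hi'.le, hueq (i+1) hi']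
      rw [edist_dist, dist_comm]
      push_cast
      ring_nf
    exact (ENNReal.ofReal_le_ofReal_iff hKd).1 hconv

/-- If `S₁` is `K`-connected in `S₂ ⊇ S₁` and `f` is locally Lipschitz with
constant `c` at every point of `S₂`, then `f` is globally Lipschitz on `S₁` with constant `c·K`. -/
theorem local_to_global_lipschitz {X₁ X₂ : Type*} [MetricSpace X₁] [MetricSpace X₂]
    (S₁ S₂ : Set X₁) (hsub : S₁ ⊆ S₂) (K c : ℝ) (hK : 0 < K)
    (hconn : IsKConnectedIn K S₁ S₂) (f : X₁ → X₂)
    (hloc : ∀ x₀ ∈ S₂, LocallyLipschitzAtWith f c x₀) :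
    ∀ x ∈ S₁, ∀ y ∈ S₁, dist (f x) (f y) ≤ c * K * dist x y := by
  intro x hx y hy
  rcases eq_or_ne x y with rfl | hxy
  · simp
  obtain ⟨γ, hγc, hγi, hγ0, hγ1, hγm, hγv⟩ := hconn x hx y hy hxy
  have hd : 0 < dist x y := dist_pos.2 hxy
  have hKd : 0 ≤ K * dist x y := by positivity
  have key := local_to_global_lipschitz_aux S₂ K c f hloc x y γ hγc hγ0 hγ1 hγm hγv hKd
  by_cases hc : 0 ≤ c
  · by_contra hlt
    push_neg at hlt
    have hKd' : 0 < K * dist x y := by positivity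
    have hcd : c < dist (f x) (f y) / (K * dist x y) := by
      rw [lt_div_iff₀ hKd']
      nlinarith
    obtain ⟨c', hcc', hc'⟩ := exists_between hcd
    obtain ⟨S, h1, h2, h3⟩ := key c' hcc'
    have h4 : c' * S ≤ c' * (K * dist x y) :=
      mul_le_mul_of_nonneg_left h3 (le_trans hc hcc'.le)
    have h5 : c' * (K * dist x y) < dist (f x) (f y) := by
      rw [lt_div_iff₀ hKd'] at hc'
      linarith
    linarith
  · push_neg at hc
    obtain ⟨S, h1, h2, h3⟩ := key (c/2) (by linarith)
    have h0 : (0:ℝ) ≤ dist (f x) (f y) := dist_nonneg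
    nlinarith
end

section
/- Let λ₁,…,λ_n be real numbers whose set is (δ, ω, k)-equidistributed, and let u ∈ S^{n−1} be (δ, ε)-incompressible. Then for every monic real polynomial q of degree k, ∑_{i=1}^n u_i² · q(λ_i)² ≥ ε·ω^{2k}. Equivalently, the leading coefficient γ_k of the k-th orthonormal polynomial of the measure μ^u = ∑_{i=1}^n u_i² δ_{λ_i} satisfies γ_k ≤ 1/(ω^k √ε). -/
open MeasureTheory Polynomial Filter
open scoped ENNReal NNReal InnerProductSpace

private lemma multiset_prod_map_le {α : Type*} (s : Multiset α) (f g : α → ℝ)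
    (h0 : ∀ a ∈ s, 0 ≤ f a) (h : ∀ a ∈ s, f a ≤ g a) :
    (s.map f).prod ≤ (s.map g).prod := by
  induction s using Multiset.induction_on with
  | empty => simp
  | cons a s ih =>
    simp only [Multiset.map_cons, Multiset.prod_cons]
    have hf0 : ∀ b ∈ s, 0 ≤ f b := fun b hb => h0 b (Multiset.mem_cons_of_mem hb)
    have hfg : ∀ b ∈ s, f b ≤ g b := fun b hb => h b (Multiset.mem_cons_of_mem hb)
    have hpf : 0 ≤ (s.map f).prod := Multiset.prod_nonneg (by
      intro x hx
      obtain ⟨b, hb, rfl⟩ := Multiset.mem_map.mp hx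
      exact hf0 b hb)
    have ha := h a (Multiset.mem_cons_self a s)
    have ha0 := h0 a (Multiset.mem_cons_self a s)
    exact mul_le_mul ha (ih hf0 hfg) hpf (le_trans ha0 ha)

private lemma prod_range_getD (l : List ℝ) (f : ℝ → ℝ) :
    ∏ j ∈ Finset.range l.length, f (l.getD j 0) = (l.map f).prod := by
  induction l with
  | nil => simp
  | cons a l ih =>
    rw [List.length_cons, Finset.prod_range_succ']
    simp only [List.getD_cons_succ, List.getD_cons_zero, List.map_cons, List.prod_cons, ih]
    ring

private lemma eval_sq_ge (q : Polynomial ℝ) (hm : q.Monic) (x : ℝ) :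
    ((q.map (algebraMap ℝ ℂ)).roots.map fun z => (x - z.re) ^ 2).prod ≤ (q.eval x) ^ 2 := by
  set p : Polynomial ℂ := q.map (algebraMap ℝ ℂ) with hp
  have hpm : p.Monic := hm.map _
  have hsp : p.Splits := IsAlgClosed.splits p
  have hfact : p = (p.roots.map fun a => X - C a).prod :=
    hsp.eq_prod_roots_of_monic hpm
  have hev : ((q.eval x : ℝ) : ℂ) = p.eval (x : ℂ) := by
    rw [hp, Polynomial.eval_map]
    simpa using (Polynomial.eval₂_at_apply (algebraMap ℝ ℂ) x (p := q)).symm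
  have h2 : (q.eval x) ^ 2 = (p.roots.map fun z => Complex.normSq ((x : ℂ) - z)).prod := by
    have : (q.eval x) ^ 2 = Complex.normSq ((q.eval x : ℝ) : ℂ) := by
      rw [Complex.normSq_ofReal]; ring
    rw [this, hev]
    conv_lhs => rw [hfact]
    rw [Polynomial.eval_multiset_prod, Multiset.map_map, map_multiset_prod Complex.normSq,
      Multiset.map_map]
    apply congrArg
    apply Multiset.map_congr rfl
    intro z _
    simp [Function.comp]
  rw [h2]
  apply multiset_prod_map_le
  · intro a _; positivity
  · intro a _
    have : ((x : ℂ) - a).re = x - a.re := by simp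
    rw [Complex.normSq_apply, this]
    nlinarith [sq_nonneg ((x:ℂ) - a).im]

/-- If the `λ_i` are `(δ, ω, k)`-equidistributed and `u ∈ S^{n-1}` is
`(δ, ε)`-incompressible, then every monic real polynomial `q` of degree `k` satisfies
`∑_i u_i² q(λ_i)² ≥ ε ω^{2k}` (equivalently, `γ_k ≤ 1/(ω^k √ε)` for the leading coefficient of
the `k`-th orthonormal polynomial of `μ^u = ∑ u_i² δ_{λ_i}`). -/
theorem monic_lower_bound {n : ℕ} (lam : Fin n → ℝ) (δ ω ε : ℝ)
    (hδ : 0 < δ) (hδ1 : δ ≤ 1) (hω : 0 < ω) (hε : 0 < ε) (k : ℕ)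
    (heq : EquidistributedTuple n lam δ ω k)
    (u : EuclideanSpace ℝ (Fin n)) (hu : u ∈ sphereIncompressible n δ ε)
    (q : Polynomial ℝ) (hmonic : q.Monic) (hdeg : q.natDegree = k) :
    ε * ω ^ (2 * k) ≤ ∑ i : Fin n, (u i) ^ 2 * (q.eval (lam i)) ^ 2 := by
  classical
  obtain ⟨hnorm, hincomp⟩ := hu
  rcases Nat.eq_zero_or_pos k with hk0 | hkpos
  · subst hk0
    have hq1 : q = 1 := by
      have := Polynomial.natDegree_eq_zero_iff_degree_le_zero.mp hdeg
      exact Polynomial.eq_one_of_monic_natDegree_zero hmonic hdeg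
    have h1 : ε < ∑ i ∈ Finset.univ, (u i) ^ 2 := by
      apply hincomp
      simp only [Finset.card_univ, Fintype.card_fin]
      calc δ * n ≤ 1 * n := mul_le_mul_of_nonneg_right hδ1 (Nat.cast_nonneg n)
        _ = n := one_mul _
    simp only [hq1, Polynomial.eval_one, one_pow, mul_one, mul_zero, pow_zero]
    exact h1.le
  · set p : Polynomial ℂ := q.map (algebraMap ℝ ℂ) with hp
    have hpm : p.Monic := hmonic.map _
    have hsp : p.Splits := IsAlgClosed.splits p
    have hpdeg : p.natDegree = k := by rw [hp, hmonic.natDegree_map]; exact hdeg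
    have hroots : p.roots.card = k := by
      rw [(Polynomial.splits_iff_card_roots).mp hsp, hpdeg]
    set rl : List ℝ := (p.roots.map Complex.re).sort (· ≤ ·) with hrl
    have hrllen : rl.length = k := by
      rw [hrl, Multiset.length_sort, Multiset.card_map, hroots]
    have hrlsorted : rl.Pairwise (· ≤ ·) := Multiset.pairwise_sort _ _
    set t : ℕ → ℝ := fun j => rl.getD j 0 with ht
    have htmono : ∀ j j', j < j' → j' < k → t j ≤ t j' := by
      intro j j' hjj' hj'
      have hj2 : j < rl.length := by omega
      have hj'2 : j' < rl.length := by omega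
      have := List.Pairwise.rel_get_of_lt hrlsorted
        (show (⟨j, hj2⟩ : Fin rl.length) < ⟨j', hj'2⟩ from hjj')
      simp only [ht]
      rw [List.getD_eq_getElem _ _ hj2, List.getD_eq_getElem _ _ hj'2]
      simpa [List.get_eq_getElem] using this
    set η : ℕ → ℝ := fun m => 1 / ((m : ℝ) + 1) with hη
    have hηpos : ∀ m, 0 < η m := fun m => by positivity
    set Sm : ℕ → Finset (Fin n) := fun m =>
      Finset.univ.filter fun i => ω ^ k ≤ ∏ j ∈ Finset.range k, |lam i - (t j + j * η m)|
      with hSmdef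
    have hSm : ∀ m : ℕ, δ * n ≤ ((Sm m).card : ℝ) := by
      intro m
      set T : Finset ℝ := (Finset.range k).image (fun j => t j + j * η m) with hT
      have hlt : ∀ x y : ℕ, x < y → y < k → t x + x * η m < t y + y * η m := by
        intro x y hxy hy
        have h1 := htmono x y hxy hy
        have h2 : (x : ℝ) * η m < y * η m := by
          apply mul_lt_mul_of_pos_right _ (hηpos m)
          exact_mod_cast hxy
        linarith
      have hinj : ∀ x ∈ Finset.range k, ∀ y ∈ Finset.range k,
          t x + x * η m = t y + y * η m → x = y := by
        intro x hx y hy hxy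
        by_contra hne
        rcases lt_or_gt_of_ne hne with h | h
        · exact absurd hxy (ne_of_lt (hlt x y h (Finset.mem_range.mp hy)))
        · exact absurd hxy.symm (ne_of_lt (hlt y x h (Finset.mem_range.mp hx)))
      have hTcard : T.card = k := by
        rw [hT, Finset.card_image_of_injOn hinj, Finset.card_range]
      have hTne : T.Nonempty := by
        rw [hT]
        exact (Finset.nonempty_range_iff.mpr hkpos.ne').image _
      have h := heq T hTne (le_of_eq hTcard)
      rw [hTcard] at h
      have hfe : (Finset.univ.filter fun i => ω ^ k ≤ ∏ s ∈ T, |lam i - s|) = Sm m := by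
        apply Finset.filter_congr
        intro i _
        rw [hT, Finset.prod_image hinj]
      rwa [hfe] at h
    obtain ⟨S, hSfib⟩ := Finite.exists_infinite_fiber Sm
    have hMinf : (Sm ⁻¹' {S}).Infinite := Set.infinite_coe_iff.mp hSfib
    obtain ⟨m₀, hm₀⟩ := hMinf.nonempty
    have hScard : δ * n ≤ (S.card : ℝ) := by
      rw [← show Sm m₀ = S from hm₀]; exact hSm m₀
    have hkey : ∀ i ∈ S, ω ^ k ≤ ∏ j ∈ Finset.range k, |lam i - t j| := by
      intro i hi
      have hfreq : ∃ᶠ m in Filter.atTop,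
          (∏ j ∈ Finset.range k, |lam i - (t j + j * η m)|) ∈ Set.Ici (ω ^ k) := by
        rw [Nat.frequently_atTop_iff_infinite]
        apply hMinf.mono
        intro m hm
        have hmem : i ∈ Sm m := by
          rw [show Sm m = S from hm]; exact hi
        simpa [hSmdef] using (Finset.mem_filter.mp hmem).2
      have htend : Filter.Tendsto
          (fun m : ℕ => ∏ j ∈ Finset.range k, |lam i - (t j + j * η m)|)
          Filter.atTop (nhds (∏ j ∈ Finset.range k, |lam i - t j|)) := by
        have h0 : Filter.Tendsto η Filter.atTop (nhds 0) :=
          tendsto_one_div_add_atTop_nhds_zero_nat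
        have hcont : Continuous fun x : ℝ => ∏ j ∈ Finset.range k, |lam i - (t j + j * x)| := by
          apply continuous_finset_prod
          intro j _
          exact (continuous_const.sub (continuous_const.add
            (continuous_const.mul continuous_id))).abs
        have := (hcont.tendsto 0).comp h0
        simpa [Function.comp_def] using this
      have hcl := mem_closure_of_frequently_of_tendsto hfreq htend
      rwa [closure_Ici] at hcl
    have hpoly : ∀ x : ℝ, ∏ j ∈ Finset.range k, (x - t j) ^ 2 ≤ (q.eval x) ^ 2 := by
      intro x
      have h1 : ∏ j ∈ Finset.range k, (x - t j) ^ 2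
          = (p.roots.map fun z => (x - z.re) ^ 2).prod := by
        have h2 := prod_range_getD rl (fun s => (x - s) ^ 2)
        rw [hrllen] at h2
        rw [ht] at *
        rw [h2]
        have h3 : (p.roots.map Complex.re) = (rl : Multiset ℝ) := (Multiset.sort_eq _ _).symm
        rw [← Multiset.prod_coe, ← Multiset.map_coe, ← h3, Multiset.map_map]
        rfl
      rw [h1]
      exact eval_sq_ge q hmonic x
    have hsum : ∀ i ∈ S, ω ^ (2 * k) ≤ (q.eval (lam i)) ^ 2 := by
      intro i hi
      have h1 := hkey i hi
      have h2 : (ω ^ k) ^ 2 ≤ (∏ j ∈ Finset.range k, |lam i - t j|) ^ 2 :=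
        pow_le_pow_left₀ (pow_nonneg hω.le k) h1 2
      calc ω ^ (2 * k) = (ω ^ k) ^ 2 := by rw [← pow_mul, mul_comm]
        _ ≤ (∏ j ∈ Finset.range k, |lam i - t j|) ^ 2 := h2
        _ = ∏ j ∈ Finset.range k, (lam i - t j) ^ 2 := by
            rw [← Finset.prod_pow]; simp [sq_abs]
        _ ≤ (q.eval (lam i)) ^ 2 := hpoly (lam i)
    calc ε * ω ^ (2 * k) ≤ (∑ i ∈ S, (u i) ^ 2) * ω ^ (2 * k) :=
          mul_le_mul_of_nonneg_right (hincomp S hScard).le (by positivity)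
      _ = ∑ i ∈ S, (u i) ^ 2 * ω ^ (2 * k) := by rw [Finset.sum_mul]
      _ ≤ ∑ i ∈ S, (u i) ^ 2 * (q.eval (lam i)) ^ 2 :=
          Finset.sum_le_sum fun i hi => mul_le_mul_of_nonneg_left (hsum i hi) (sq_nonneg _)
      _ ≤ ∑ i : Fin n, (u i) ^ 2 * (q.eval (lam i)) ^ 2 :=
          Finset.sum_le_sum_of_subset_of_nonneg (Finset.subset_univ S)
            (fun i _ _ => by positivity)
end

section
/- Let ν be a compactly supported Borel probability measure on ℝ with nontrivial absolutely continuous part (i.e. ν = ν₁ + ν₂ where ν₁ is a nonzero measure absolutely continuous with respect to Lebesgue measure). Then there exist constants δ, ω > 0 such that ν is (δ, ω, j)-equidistributed for every natural number j. -/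
open MeasureTheory Polynomial Filter
open scoped ENNReal NNReal InnerProductSpace

open Set in
lemma poslog_measurable (t : ℝ) :
    Measurable fun x : ℝ => max 0 (-Real.log |x - t|) :=
  measurable_const.max ((Real.measurable_log.comp ((measurable_id.sub_const t).abs)).neg)

open Set in
lemma poslog_lintegral_le (t : ℝ) :
    ∫⁻ x : ℝ, ENNReal.ofReal (max 0 (-Real.log |x - t|)) ≤ ENNReal.ofReal 2 := by
  have hnn : 0 ≤ᶠ[ae volume] fun x : ℝ => max 0 (-Real.log |x - t|) :=
    Filter.Eventually.of_forall fun x => le_max_left _ _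
  rw [lintegral_eq_lintegral_meas_le volume hnn (poslog_measurable t).aemeasurable]
  have hint : IntegrableOn (fun s : ℝ => 2 * Real.exp (-s)) (Ioi 0) volume := by
    have := (exp_neg_integrableOn_Ioi 0 (b := 1) one_pos).const_mul 2
    have h2 : Integrable (fun x : ℝ => 2 * Real.exp (-x)) (volume.restrict (Ioi 0)) := by
      simpa using this
    exact h2
  calc ∫⁻ s in Ioi 0, volume {x : ℝ | s ≤ max 0 (-Real.log |x - t|)}
      ≤ ∫⁻ s in Ioi 0, ENNReal.ofReal (2 * Real.exp (-s)) := by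
        refine setLIntegral_mono (by fun_prop) fun s hs => ?_
        have hs0 : (0:ℝ) < s := hs
        have hsub : {x : ℝ | s ≤ max 0 (-Real.log |x - t|)} ⊆
            Icc (t - Real.exp (-s)) (t + Real.exp (-s)) := by
          intro x hx
          simp only [mem_setOf_eq] at hx
          have hlog : s ≤ -Real.log |x - t| := by
            rcases max_cases (0:ℝ) (-Real.log |x - t|) with ⟨h1, h2⟩ | ⟨h1, h2⟩
            · rw [h1] at hx; linarith
            · rwa [h1] at hx
          have habs : |x - t| ≤ Real.exp (-s) := by
            by_contra h
            push_neg at h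
            have := Real.log_lt_log (Real.exp_pos _) h
            rw [Real.log_exp] at this
            linarith
          rw [abs_sub_le_iff] at habs
          constructor <;> linarith [habs.1, habs.2]
        calc volume {x : ℝ | s ≤ max 0 (-Real.log |x - t|)}
            ≤ volume (Icc (t - Real.exp (-s)) (t + Real.exp (-s))) := measure_mono hsub
          _ = ENNReal.ofReal (2 * Real.exp (-s)) := by rw [Real.volume_Icc]; ring_nf
    _ = ENNReal.ofReal (∫ s in Ioi 0, 2 * Real.exp (-s)) := by
        rw [ofReal_integral_eq_lintegral_ofReal hint
          (Filter.Eventually.of_forall fun s => by positivity)]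
    _ ≤ ENNReal.ofReal 2 := by
        apply ENNReal.ofReal_le_ofReal
        rw [MeasureTheory.integral_const_mul, integral_exp_neg_Ioi]
        simp

set_option maxHeartbeats 1000000 in
/-- A compactly supported Borel probability measure on `ℝ` with nontrivial
absolutely continuous part is `(δ, ω, j)`-equidistributed for some `δ, ω > 0` and every `j`. -/
theorem absolutelyContinuous_equidistributed (ν ν₁ ν₂ : Measure ℝ) [IsProbabilityMeasure ν]
    (hsplit : ν = ν₁ + ν₂) (hac : ν₁ ≪ volume) (hne : ν₁ ≠ 0)
    (hcomp : ∃ C : ℝ, ν (Set.Icc (-C) C)ᶜ = 0) :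
    ∃ δ > (0 : ℝ), ∃ ω > (0 : ℝ), ∀ j : ℕ, EquidistributedMeasure ν δ ω j := by
  clear hcomp
  have hle : ν₁ ≤ ν := by rw [hsplit]; exact Measure.le_add_right le_rfl
  haveI : IsFiniteMeasure ν₁ :=
    ⟨lt_of_le_of_lt (hle Set.univ) (measure_lt_top ν _)⟩
  set f := ν₁.rnDeriv volume with hfdef
  have hfm : Measurable f := Measure.measurable_rnDeriv _ _
  -- choose M with positive mass where density ≤ M
  obtain ⟨M, hM⟩ : ∃ M : ℕ, 0 < ν₁ {x | f x ≤ M} := by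
    by_contra h
    push_neg at h
    have hU : ν₁ (⋃ M : ℕ, {x | f x ≤ M}) = 0 :=
      measure_iUnion_null fun M => le_antisymm (h M) zero_le
    have hinf : ν₁ {x | f x = ∞} = 0 := by
      refine hac ?_
      have hv := Measure.rnDeriv_lt_top ν₁ volume
      simpa [ae_iff, not_lt, top_le_iff] using hv
    have : ν₁ Set.univ = 0 := by
      apply le_antisymm ?_ zero_le
      have hsub : (Set.univ : Set ℝ) ⊆ {x | f x = ∞} ∪ ⋃ M : ℕ, {x | f x ≤ M} := by
        intro x _
        by_cases hx : f x = ∞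
        · exact Or.inl hx
        · right
          obtain ⟨n, hn⟩ := ENNReal.exists_nat_gt (lt_top_iff_ne_top.mpr hx).ne
          exact Set.mem_iUnion.mpr ⟨n, hn.le⟩
      calc ν₁ Set.univ ≤ ν₁ ({x | f x = ∞} ∪ ⋃ M : ℕ, {x | f x ≤ M}) := measure_mono hsub
        _ ≤ ν₁ {x | f x = ∞} + ν₁ (⋃ M : ℕ, {x | f x ≤ M}) := measure_union_le _ _
        _ ≤ 0 := by rw [hU, hinf, add_zero]
    exact hne (Measure.measure_univ_eq_zero.mp this)
  set A := {x | f x ≤ (M : ℝ≥0∞)} with hAdef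
  have hAm : MeasurableSet A := hfm measurableSet_Iic
  set μ := volume.withDensity (A.indicator f) with hμdef
  have hμ : μ = ν₁.restrict A := by
    rw [hμdef, withDensity_indicator hAm, ← restrict_withDensity hAm,
      Measure.withDensity_rnDeriv_eq ν₁ volume hac]
  set c := ν₁ A with hcdef
  have hcne : c ≠ ∞ := (lt_of_le_of_lt (measure_mono (Set.subset_univ A))
    (measure_lt_top ν₁ _)).ne
  set c' := c.toReal with hc'def
  have hc'pos : 0 < c' := ENNReal.toReal_pos hM.ne' hcne
  set L := (4 * (M : ℝ) + 4) / c' with hLdef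
  have hLpos : 0 < L := by positivity
  refine ⟨c' / 2, by positivity, Real.exp (-L), Real.exp_pos _, fun j T hTne hTcard => ?_⟩
  clear hTcard
  set k := T.card with hkdef
  have hk0 : 0 < k := Finset.card_pos.mpr hTne
  set G := {x : ℝ | Real.exp (-L) ^ k ≤ ∏ t ∈ T, |x - t|} with hGdef
  have hGm : MeasurableSet G := by
    apply measurableSet_le measurable_const
    exact Finset.measurable_prod _ fun t _ => (measurable_id.sub_const t).abs
  -- the ENNReal-valued sum of positive logs
  set F : ℝ → ℝ≥0∞ := fun x => ∑ t ∈ T, ENNReal.ofReal (max 0 (-Real.log |x - t|)) with hFdef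
  have hFm : Measurable F :=
    Finset.measurable_sum _ fun t _ => (poslog_measurable t).ennreal_ofReal
  -- Markov bound on μ Gᶜ
  have hsubset : Gᶜ \ (↑T : Set ℝ) ⊆ {x | ENNReal.ofReal (k * L) ≤ F x} := by
    intro x hx
    obtain ⟨hxG, hxT⟩ := hx
    have hne0 : ∀ t ∈ T, |x - t| ≠ 0 := by
      intro t ht h0
      apply hxT
      have : x = t := by
        have := abs_eq_zero.mp h0; linarith
      rw [this]; exact_mod_cast ht
    have hprodpos : 0 < ∏ t ∈ T, |x - t| :=
      Finset.prod_pos fun t ht => (abs_nonneg _).lt_of_ne' (hne0 t ht)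
    have hxlt : ∏ t ∈ T, |x - t| < Real.exp (-L) ^ k := not_le.mp hxG
    have hlog : ∑ t ∈ T, Real.log |x - t| < -(k * L) := by
      have := Real.log_lt_log hprodpos hxlt
      rw [Real.log_prod hne0, Real.log_pow, Real.log_exp] at this
      linarith [this]
    have hsum : (k : ℝ) * L ≤ ∑ t ∈ T, max 0 (-Real.log |x - t|) := by
      have h1 : ∑ t ∈ T, -Real.log |x - t| ≤ ∑ t ∈ T, max 0 (-Real.log |x - t|) :=
        Finset.sum_le_sum fun t _ => le_max_right _ _
      have h2 : (k : ℝ) * L ≤ ∑ t ∈ T, -Real.log |x - t| := by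
        have hnn : (∑ t ∈ T, -Real.log |x - t|) = -∑ t ∈ T, Real.log |x - t| := by
          simp
        rw [hnn]
        linarith
      linarith
    calc ENNReal.ofReal (k * L) ≤ ENNReal.ofReal (∑ t ∈ T, max 0 (-Real.log |x - t|)) :=
          ENNReal.ofReal_le_ofReal hsum
      _ = F x := ENNReal.ofReal_sum_of_nonneg fun t _ => le_max_left _ _
  have hμT : μ (↑T : Set ℝ) = 0 := by
    apply (withDensity_absolutelyContinuous volume _)
    exact (Set.Finite.measure_zero (T.finite_toSet) volume)
  have hFint : ∫⁻ x, F x ∂μ ≤ (k : ℝ≥0∞) * ENNReal.ofReal (2 * M) := by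
    rw [hFdef]
    rw [lintegral_finset_sum _ fun t _ => (poslog_measurable t).ennreal_ofReal]
    calc ∑ t ∈ T, ∫⁻ x, ENNReal.ofReal (max 0 (-Real.log |x - t|)) ∂μ
        ≤ ∑ _t ∈ T, ENNReal.ofReal (2 * M) := by
          refine Finset.sum_le_sum fun t _ => ?_
          rw [hμdef, lintegral_withDensity_eq_lintegral_mul volume
            (hfm.indicator hAm) (poslog_measurable t).ennreal_ofReal]
          have hbd : ∀ x, (A.indicator f * fun x =>
              ENNReal.ofReal (max 0 (-Real.log |x - t|))) x ≤
              (M : ℝ≥0∞) * ENNReal.ofReal (max 0 (-Real.log |x - t|)) := by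
            intro x
            simp only [Pi.mul_apply]
            gcongr
            by_cases hx : x ∈ A
            · rw [Set.indicator_of_mem hx]; exact hx
            · rw [Set.indicator_of_notMem hx]; exact zero_le
          calc ∫⁻ x, (A.indicator f * fun x =>
                ENNReal.ofReal (max 0 (-Real.log |x - t|))) x ∂volume
              ≤ ∫⁻ x, (M : ℝ≥0∞) * ENNReal.ofReal (max 0 (-Real.log |x - t|)) ∂volume :=
                lintegral_mono hbd
            _ = (M : ℝ≥0∞) * ∫⁻ x, ENNReal.ofReal (max 0 (-Real.log |x - t|)) ∂volume :=
                lintegral_const_mul _ (poslog_measurable t).ennreal_ofReal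
            _ ≤ (M : ℝ≥0∞) * ENNReal.ofReal 2 := by gcongr; exact poslog_lintegral_le t
            _ = ENNReal.ofReal (2 * M) := by
                rw [mul_comm, ENNReal.ofReal_mul (by norm_num)]
                simp [ENNReal.ofReal_natCast]
      _ = (k : ℝ≥0∞) * ENNReal.ofReal (2 * M) := by
          rw [Finset.sum_const, hkdef, nsmul_eq_mul]
  have hμGc : μ Gᶜ ≤ ENNReal.ofReal (c' / 2) := by
    have h1 : μ Gᶜ ≤ μ {x | ENNReal.ofReal (k * L) ≤ F x} := by
      calc μ Gᶜ ≤ μ (Gᶜ \ (↑T : Set ℝ)) + μ (↑T : Set ℝ) :=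
            le_trans (measure_mono (by intro x hx; by_cases h : x ∈ (↑T : Set ℝ)
                                       · exact Or.inr h
                                       · exact Or.inl ⟨hx, h⟩)) (measure_union_le _ _)
        _ = μ (Gᶜ \ (↑T : Set ℝ)) := by rw [hμT, add_zero]
        _ ≤ μ {x | ENNReal.ofReal (k * L) ≤ F x} := measure_mono hsubset
    have h2 : μ {x | ENNReal.ofReal (k * L) ≤ F x} ≤
        (∫⁻ x, F x ∂μ) / ENNReal.ofReal (k * L) :=
      meas_ge_le_lintegral_div hFm.aemeasurable
        (ENNReal.ofReal_pos.mpr (mul_pos (Nat.cast_pos.mpr hk0) hLpos)).ne'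
        ENNReal.ofReal_ne_top
    have h3 : (∫⁻ x, F x ∂μ) / ENNReal.ofReal (k * L) ≤ ENNReal.ofReal (c' / 2) := by
      calc (∫⁻ x, F x ∂μ) / ENNReal.ofReal (k * L)
          ≤ ((k : ℝ≥0∞) * ENNReal.ofReal (2 * M)) / ((k : ℝ≥0∞) * ENNReal.ofReal L) := by
            rw [ENNReal.ofReal_mul (Nat.cast_nonneg k), ENNReal.ofReal_natCast]
            exact ENNReal.div_le_div hFint le_rfl
        _ = ENNReal.ofReal (2 * M) / ENNReal.ofReal L :=
            ENNReal.mul_div_mul_left _ _ (Nat.cast_ne_zero.mpr hk0.ne') (ENNReal.natCast_ne_top k)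
        _ = ENNReal.ofReal (2 * M / L) := (ENNReal.ofReal_div_of_pos hLpos).symm
        _ ≤ ENNReal.ofReal (c' / 2) := by
            apply ENNReal.ofReal_le_ofReal
            rw [div_le_iff₀ hLpos]
            have hLeq : c' / 2 * L = 2 * M + 2 := by
              rw [hLdef]
              field_simp
              ring
            rw [hLeq]
            linarith
    exact le_trans h1 (le_trans h2 h3)
  -- conclude
  have hμuniv : μ Set.univ = c := by rw [hμ, Measure.restrict_apply_univ]
  have hμG : ENNReal.ofReal (c' / 2) ≤ μ G := by
    have hhalf : ENNReal.ofReal (c' / 2) = c / 2 := by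
      rw [ENNReal.ofReal_div_of_pos (by norm_num), hc'def, ENNReal.ofReal_toReal hcne]
      norm_num
    have hsplit2 : c ≤ μ G + μ Gᶜ := by
      have hμeq : μ G + μ Gᶜ = μ Set.univ := by
        rw [← measure_union disjoint_compl_right hGm.compl, Set.union_compl_self]
      rw [hμeq, hμuniv]
    have h4 : c ≤ μ G + c / 2 := by
      refine le_trans hsplit2 ?_
      gcongr
      rw [← hhalf]
      exact hμGc
    rw [hhalf, ← ENNReal.sub_half hcne]
    exact tsub_le_iff_right.mpr h4
  calc ENNReal.ofReal (c' / 2) ≤ μ G := hμG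
    _ ≤ ν₁ G := by rw [hμ]; exact Measure.restrict_le_self G
    _ ≤ ν G := hle G
end

section
/- Let μ and ν be Borel probability measures on ℝ. If μ is (δ, ω, j)-equidistributed for some δ, ω > 0 and j ∈ ℕ, then ν is (δ − 4j·Kol(μ, ν), ω, j)-equidistributed. -/
open MeasureTheory Polynomial Filter
open scoped ENNReal NNReal InnerProductSpace

open MeasureTheory Set

private lemma kol_abs_le (μ ν : Measure ℝ) [IsProbabilityMeasure μ] [IsProbabilityMeasure ν]
    (t : ℝ) : |(μ (Set.Iic t)).toReal - (ν (Set.Iic t)).toReal| ≤ kolDist μ ν := by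
  apply le_ciSup (f := fun t : ℝ => |(μ (Set.Iic t)).toReal - (ν (Set.Iic t)).toReal|)
  · refine ⟨2, ?_⟩
    rintro x ⟨s, rfl⟩
    have h1 : (μ (Set.Iic s)).toReal ≤ 1 := by
      simpa using ENNReal.toReal_mono (by simp) (prob_le_one (μ := μ) (s := Set.Iic s))
    have h2 : (ν (Set.Iic s)).toReal ≤ 1 := by
      simpa using ENNReal.toReal_mono (by simp) (prob_le_one (μ := ν) (s := Set.Iic s))
    have h3 : 0 ≤ (μ (Set.Iic s)).toReal := ENNReal.toReal_nonneg
    have h4 : 0 ≤ (ν (Set.Iic s)).toReal := ENNReal.toReal_nonneg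
    rw [abs_le]; constructor <;> linarith

private lemma kol_nonneg (μ ν : Measure ℝ) [IsProbabilityMeasure μ] [IsProbabilityMeasure ν] :
    0 ≤ kolDist μ ν := le_trans (abs_nonneg _) (kol_abs_le μ ν 0)

private lemma kol_Ioc (μ ν : Measure ℝ) [IsProbabilityMeasure μ] [IsProbabilityMeasure ν]
    (a b : ℝ) : ν (Set.Ioc a b) ≤ μ (Set.Ioc a b) + ENNReal.ofReal (2 * kolDist μ ν) := by
  rcases le_or_gt b a with h | h
  · simp [Set.Ioc_eq_empty_of_le h]
  have key : ∀ (ρ : Measure ℝ) [IsProbabilityMeasure ρ],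
      (ρ (Set.Ioc a b)).toReal = (ρ (Set.Iic b)).toReal - (ρ (Set.Iic a)).toReal := by
    intro ρ _
    have hu : Set.Iic a ∪ Set.Ioc a b = Set.Iic b := Set.Iic_union_Ioc_eq_Iic h.le
    have hd : Disjoint (Set.Iic a) (Set.Ioc a b) := by
      rw [Set.disjoint_left]; rintro x hx ⟨hx1, _⟩; exact absurd hx (not_le.2 hx1)
    have := measure_union hd measurableSet_Ioc (μ := ρ)
    rw [hu] at this
    rw [this, ENNReal.toReal_add (measure_ne_top _ _) (measure_ne_top _ _)]
    ring
  have h1 := abs_le.1 (kol_abs_le μ ν a)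
  have h2 := abs_le.1 (kol_abs_le μ ν b)
  have hle : (ν (Set.Ioc a b)).toReal ≤ (μ (Set.Ioc a b)).toReal + 2 * kolDist μ ν := by
    rw [key μ, key ν]; linarith [h1.1, h1.2, h2.1, h2.2]
  calc ν (Set.Ioc a b) = ENNReal.ofReal (ν (Set.Ioc a b)).toReal := by
        rw [ENNReal.ofReal_toReal (measure_ne_top _ _)]
    _ ≤ ENNReal.ofReal ((μ (Set.Ioc a b)).toReal + 2 * kolDist μ ν) :=
        ENNReal.ofReal_le_ofReal hle
    _ ≤ ENNReal.ofReal (μ (Set.Ioc a b)).toReal + ENNReal.ofReal (2 * kolDist μ ν) :=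
        ENNReal.ofReal_add_le
    _ = μ (Set.Ioc a b) + ENNReal.ofReal (2 * kolDist μ ν) := by
        rw [ENNReal.ofReal_toReal (measure_ne_top _ _)]

private lemma kol_Ioo (μ ν : Measure ℝ) [IsProbabilityMeasure μ] [IsProbabilityMeasure ν]
    (a b : ℝ) : ν (Set.Ioo a b) ≤ μ (Set.Ioo a b) + ENNReal.ofReal (2 * kolDist μ ν) := by
  rcases le_or_gt b a with h | h
  · simp [Set.Ioo_eq_empty_of_le h]
  have hUnion : Set.Ioo a b = ⋃ n : ℕ, Set.Ioc a (b - 1 / (n + 1)) := by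
    ext x
    simp only [Set.mem_Ioo, Set.mem_iUnion, Set.mem_Ioc]
    constructor
    · rintro ⟨hx1, hx2⟩
      obtain ⟨n, hn⟩ := exists_nat_one_div_lt (show (0:ℝ) < b - x by linarith)
      exact ⟨n, hx1, by linarith⟩
    · rintro ⟨n, hx1, hx2⟩
      have : (0:ℝ) < 1 / (n + 1) := by positivity
      exact ⟨hx1, by linarith⟩
  have hdir : Directed (· ⊆ ·) (fun n : ℕ => Set.Ioc a (b - 1 / (n + 1))) := by
    apply Monotone.directed_le
    intro n m hnm
    apply Set.Ioc_subset_Ioc_right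
    have h1 : (0:ℝ) < n + 1 := by positivity
    have h2 : (n:ℝ) + 1 ≤ m + 1 := by exact_mod_cast by omega
    have := one_div_le_one_div_of_le h1 h2
    linarith
  rw [hUnion, hdir.measure_iUnion]
  apply iSup_le
  intro n
  refine (kol_Ioc μ ν a _).trans (add_le_add_left (measure_mono ?_) _)
  exact Set.subset_iUnion (fun n : ℕ => Set.Ioc a (b - 1 / (n + 1))) n

private lemma aux_eval (T : Finset ℝ) (k x : ℝ) :
    ((∏ t ∈ T, (Polynomial.X - Polynomial.C t)) ^ 2 - Polynomial.C k).eval x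
      = (∏ t ∈ T, (x - t)) ^ 2 - k := by
  simp [Polynomial.eval_prod]

private lemma aux_ne (T : Finset ℝ) (hT : T.Nonempty) (k : ℝ) (hk : 0 < k) :
    (∏ t ∈ T, (Polynomial.X - Polynomial.C t)) ^ 2 - Polynomial.C k ≠ 0 := by
  intro h0
  obtain ⟨t0, ht0⟩ := hT
  have h1 : ((∏ t ∈ T, (Polynomial.X - Polynomial.C t)) ^ 2 - Polynomial.C k).eval t0 = 0 := by
    rw [h0]; simp
  rw [aux_eval, Finset.prod_eq_zero ht0 (by ring)] at h1
  nlinarith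

private lemma aux_deg (T : Finset ℝ) (k : ℝ) :
    ((∏ t ∈ T, (Polynomial.X - Polynomial.C t)) ^ 2 - Polynomial.C k).natDegree ≤ 2 * T.card := by
  refine (Polynomial.natDegree_sub_le _ _).trans ?_
  simp only [Polynomial.natDegree_pow, Polynomial.natDegree_C, max_le_iff]
  constructor
  · have h1 := Polynomial.natDegree_prod_le T (fun t => Polynomial.X - Polynomial.C t)
    have h2 : ∑ t ∈ T, (Polynomial.X - Polynomial.C t).natDegree ≤ ∑ _t ∈ T, 1 :=
      Finset.sum_le_sum fun t _ => Polynomial.natDegree_X_sub_C_le t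
    have h3 : ∑ _t ∈ T, 1 = T.card := by simp
    omega
  · omega

/-- If `μ` is `(δ, ω, j)`-equidistributed then any probability measure `ν` is
`(δ − 4 j Kol(μ, ν), ω, j)`-equidistributed. -/
theorem equidistributed_of_kolDist (μ ν : Measure ℝ)
    [IsProbabilityMeasure μ] [IsProbabilityMeasure ν]
    (δ ω : ℝ) (hδ : 0 < δ) (hω : 0 < ω) (j : ℕ)
    (heq : EquidistributedMeasure μ δ ω j) :
    EquidistributedMeasure ν (δ - 4 * j * kolDist μ ν) ω j := by
  classical
  intro T hT hcard
  set c := T.card with hc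
  have hc1 : 1 ≤ c := Finset.card_pos.2 hT
  set K := kolDist μ ν with hK
  have hK0 : 0 ≤ K := kol_nonneg μ ν
  set q : Polynomial ℝ := ∏ t ∈ T, (Polynomial.X - Polynomial.C t) with hq
  set p : Polynomial ℝ := q ^ 2 - Polynomial.C ((ω ^ c) ^ 2) with hp
  have heval : ∀ x : ℝ, p.eval x = (∏ t ∈ T, (x - t)) ^ 2 - (ω ^ c) ^ 2 := by
    intro x; rw [hp, hq]; exact aux_eval T _ x
  have hiff : ∀ x : ℝ, (ω ^ c ≤ ∏ t ∈ T, |x - t|) ↔ 0 ≤ p.eval x := by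
    intro x
    rw [heval x, sub_nonneg]
    have habs : ∏ t ∈ T, |x - t| = |∏ t ∈ T, (x - t)| := (Finset.abs_prod _ _).symm
    rw [habs, ← sq_abs (∏ t ∈ T, (x - t))]
    exact (pow_le_pow_iff_left₀ (pow_nonneg hω.le c) (abs_nonneg _) two_ne_zero).symm
  have hfar : ∀ x : ℝ, (∀ t ∈ T, ω ≤ |x - t|) → 0 ≤ p.eval x := by
    intro x hx
    rw [← hiff]
    calc ω ^ c = ∏ _t ∈ T, ω := by rw [Finset.prod_const]
      _ ≤ ∏ t ∈ T, |x - t| := Finset.prod_le_prod (fun _ _ => hω.le) hx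
  have hlow : ∀ x : ℝ, x ≤ T.min' hT - (ω + 1) → 0 ≤ p.eval x := by
    intro x hx
    apply hfar
    intro t ht
    have h1 := T.min'_le t ht
    rw [abs_sub_comm, abs_of_nonneg (by linarith)]
    linarith
  have hhigh : ∀ x : ℝ, T.max' hT + (ω + 1) ≤ x → 0 ≤ p.eval x := by
    intro x hx
    apply hfar
    intro t ht
    have h1 := T.le_max' t ht
    rw [abs_of_nonneg (by linarith)]
    linarith
  -- p ≠ 0
  have hpne : p ≠ 0 := by
    rw [hp, hq]
    exact aux_ne T hT _ (pow_pos (pow_pos hω c) 2)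
  have hpdeg : p.natDegree ≤ 2 * c := by
    rw [hp, hq, hc]
    exact aux_deg T _
  set R : Finset ℝ := p.roots.toFinset with hR
  have hmemR : ∀ x : ℝ, x ∈ R ↔ p.eval x = 0 := by
    intro x
    rw [hR, Multiset.mem_toFinset, Polynomial.mem_roots hpne]
    rfl
  have hRcard : R.card ≤ 2 * c := by
    calc R.card ≤ Multiset.card p.roots := p.roots.toFinset_card_le
      _ ≤ p.natDegree := p.card_roots'
      _ ≤ 2 * c := hpdeg
  set U : Set ℝ := {x | p.eval x < 0} with hU
  set S : Set ℝ := {x | 0 ≤ p.eval x} with hS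
  have hUm : MeasurableSet U :=
    measurableSet_lt (Polynomial.continuous p).measurable measurable_const
  have hset : {x : ℝ | ω ^ T.card ≤ ∏ t ∈ T, |x - t|} = S := Set.ext fun x => hiff x
  have hScompl : S = Uᶜ := by
    ext x; simp [hU, hS, not_lt]
  -- sign constancy
  have hsign : ∀ r s x : ℝ, x ∈ Set.Ioo r s → p.eval x < 0 →
      (∀ y ∈ Set.Ioo r s, p.eval y ≠ 0) → ∀ y ∈ Set.Ioo r s, p.eval y < 0 := by
    intro r s x hx hxneg hnz y hy
    by_contra hcon
    push_neg at hcon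
    rcases le_total x y with hxy | hxy
    · obtain ⟨z, hz, hz0⟩ := intermediate_value_Icc hxy (p.continuous.continuousOn)
        (show (0:ℝ) ∈ Set.Icc (p.eval x) (p.eval y) from ⟨hxneg.le, hcon⟩)
      exact hnz z ⟨lt_of_lt_of_le hx.1 hz.1, lt_of_le_of_lt hz.2 hy.2⟩ hz0
    · obtain ⟨z, hz, hz0⟩ := intermediate_value_Icc' hxy (p.continuous.continuousOn)
        (show (0:ℝ) ∈ Set.Icc (p.eval x) (p.eval y) from ⟨hxneg.le, hcon⟩)
      exact hnz z ⟨lt_of_lt_of_le hy.1 hz.1, lt_of_le_of_lt hz.2 hx.2⟩ hz0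
  -- roots below and above any negative point
  have hrootlow : ∀ x : ℝ, p.eval x < 0 → ∃ r ∈ R, r < x := by
    intro x hx
    set x₀ := T.min' hT - (ω + 1) with hx₀
    have h0 : 0 ≤ p.eval x₀ := hlow x₀ le_rfl
    have hx₀x : x₀ ≤ x := by
      by_contra hcon
      push_neg at hcon
      exact absurd (hlow x (by linarith)) (not_le.2 hx)
    obtain ⟨z, hz, hz0⟩ := intermediate_value_Icc' hx₀x (p.continuous.continuousOn)
      (show (0:ℝ) ∈ Set.Icc (p.eval x) (p.eval x₀) from ⟨hx.le, h0⟩)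
    refine ⟨z, (hmemR z).2 hz0, lt_of_le_of_ne hz.2 ?_⟩
    intro h; rw [h] at hz0; linarith
  have hroothigh : ∀ x : ℝ, p.eval x < 0 → ∃ r ∈ R, x < r := by
    intro x hx
    set x₁ := T.max' hT + (ω + 1) with hx₁
    have h0 : 0 ≤ p.eval x₁ := hhigh x₁ le_rfl
    have hxx₁ : x ≤ x₁ := by
      by_contra hcon
      push_neg at hcon
      exact absurd (hhigh x (by linarith)) (not_le.2 hx)
    obtain ⟨z, hz, hz0⟩ := intermediate_value_Icc hxx₁ (p.continuous.continuousOn)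
      (show (0:ℝ) ∈ Set.Icc (p.eval x) (p.eval x₁) from ⟨hx.le, h0⟩)
    refine ⟨z, (hmemR z).2 hz0, lt_of_le_of_ne hz.1 ?_⟩
    intro h; rw [← h] at hz0; linarith
  -- intervals between consecutive roots
  set nxt : ℝ → ℝ := fun r =>
    if h : (R.filter fun s => r < s).Nonempty then (R.filter fun s => r < s).min' h else r
    with hnxt
  set W : ℝ → Set ℝ := fun r => Set.Ioo r (nxt r) with hW
  have hnxt_le : ∀ r s : ℝ, s ∈ R → r < s → nxt r ≤ s := by
    intro r s hs hrs
    have hne : (R.filter fun u => r < u).Nonempty := ⟨s, Finset.mem_filter.2 ⟨hs, hrs⟩⟩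
    rw [hnxt]
    simp only [dif_pos hne]
    exact Finset.min'_le _ s (Finset.mem_filter.2 ⟨hs, hrs⟩)
  set F : Finset ℝ := R.filter fun r => W r ⊆ U with hF
  have hcover : U ⊆ ⋃ r ∈ F, W r := by
    intro x hx
    have hxneg : p.eval x < 0 := hx
    have hne : (R.filter fun s => s < x).Nonempty := by
      obtain ⟨r, hrR, hrx⟩ := hrootlow x hxneg
      exact ⟨r, Finset.mem_filter.2 ⟨hrR, hrx⟩⟩
    set r := (R.filter fun s => s < x).max' hne with hr
    have hrmem := Finset.max'_mem (R.filter fun s => s < x) hne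
    have hrR : r ∈ R := (Finset.mem_filter.1 hrmem).1
    have hrx : r < x := (Finset.mem_filter.1 hrmem).2
    have hxlt : x < nxt r := by
      obtain ⟨ru, hruR, hxru⟩ := hroothigh x hxneg
      have hne2 : (R.filter fun s => r < s).Nonempty :=
        ⟨ru, Finset.mem_filter.2 ⟨hruR, lt_trans hrx hxru⟩⟩
      have hmem2 := Finset.min'_mem _ hne2
      have hnxtval : nxt r = (R.filter fun s => r < s).min' hne2 := by
        rw [hnxt]; simp only [dif_pos hne2]
      by_contra hcon
      push_neg at hcon
      have hnR : nxt r ∈ R := by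
        rw [hnxtval]; exact (Finset.mem_filter.1 hmem2).1
      have hrn : r < nxt r := by
        rw [hnxtval]; exact (Finset.mem_filter.1 hmem2).2
      have hne3 : nxt r ≠ x := by
        intro h
        have := (hmemR x).1 (h ▸ hnR)
        linarith
      have : nxt r ∈ R.filter fun s => s < x :=
        Finset.mem_filter.2 ⟨hnR, lt_of_le_of_ne hcon hne3⟩
      have := Finset.le_max' _ _ this
      rw [← hr] at this
      linarith
    have hxW : x ∈ W r := ⟨hrx, hxlt⟩
    have hnoroot : ∀ y ∈ Set.Ioo r (nxt r), p.eval y ≠ 0 := by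
      intro y hy hy0
      have hyR : y ∈ R := (hmemR y).2 hy0
      have := hnxt_le r y hyR hy.1
      linarith [hy.2]
    have hWU : W r ⊆ U := fun y hy => hsign r (nxt r) x hxW hxneg hnoroot y hy
    exact Set.mem_biUnion (Finset.mem_filter.2 ⟨hrR, hWU⟩) hxW
  have hFsubR : F ⊆ R := Finset.filter_subset _ _
  have hdisjF : (↑F : Set ℝ).PairwiseDisjoint W := by
    intro r hr s hs hrs
    have hrR : r ∈ R := hFsubR (Finset.mem_coe.1 hr)
    have hsR : s ∈ R := hFsubR (Finset.mem_coe.1 hs)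
    simp only [Function.onFun]
    rcases lt_or_gt_of_ne hrs with h | h
    · rw [Set.disjoint_left]
      rintro y ⟨_, hy2⟩ ⟨hy3, _⟩
      have := hnxt_le r s hsR h
      linarith
    · rw [Set.disjoint_left]
      rintro y ⟨hy1, _⟩ ⟨_, hy4⟩
      have := hnxt_le s r hrR h
      linarith
  -- measure chain
  have hsubU : (⋃ r ∈ F, W r) ⊆ U :=
    Set.iUnion₂_subset fun r hr => (Finset.mem_filter.1 hr).2
  have hνU : ν U ≤ μ U + ENNReal.ofReal ((2 * c) * (2 * K)) := by
    calc ν U ≤ ν (⋃ r ∈ F, W r) := measure_mono hcover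
      _ ≤ ∑ r ∈ F, ν (W r) := measure_biUnion_finset_le F W
      _ ≤ ∑ r ∈ F, (μ (W r) + ENNReal.ofReal (2 * K)) :=
          Finset.sum_le_sum fun r _ => kol_Ioo μ ν r (nxt r)
      _ = ∑ r ∈ F, μ (W r) + F.card • ENNReal.ofReal (2 * K) := by
          rw [Finset.sum_add_distrib, Finset.sum_const]
      _ = μ (⋃ r ∈ F, W r) + F.card • ENNReal.ofReal (2 * K) := by
          rw [measure_biUnion_finset hdisjF (fun r _ => measurableSet_Ioo)]
      _ ≤ μ U + ENNReal.ofReal ((2 * c) * (2 * K)) := by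
          apply add_le_add (measure_mono hsubU)
          rw [nsmul_eq_mul]
          have h1 : (F.card : ℝ≥0∞) = ENNReal.ofReal (F.card : ℝ) := by
            rw [ENNReal.ofReal_natCast]
          rw [h1, ← ENNReal.ofReal_mul (Nat.cast_nonneg _)]
          apply ENNReal.ofReal_le_ofReal
          have hFc : (F.card : ℝ) ≤ 2 * c := by
            have h2 : F.card ≤ R.card := Finset.card_le_card hFsubR
            have h3 : F.card ≤ 2 * c := le_trans h2 hRcard
            exact_mod_cast h3
          have h2K : (0:ℝ) ≤ 2 * K := by linarith
          exact mul_le_mul_of_nonneg_right hFc h2K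
  -- convert to reals
  have hμSfin : μ S ≠ ⊤ := measure_ne_top μ S
  have hνSfin : ν S ≠ ⊤ := measure_ne_top ν S
  have hcompl : ∀ (ρ : Measure ℝ) [IsProbabilityMeasure ρ],
      (ρ U).toReal = 1 - (ρ S).toReal := by
    intro ρ _
    have : S ∪ U = Set.univ := by
      rw [hScompl]; exact Set.compl_union_self U
    have hd : Disjoint S U := by
      rw [hScompl]; exact disjoint_compl_left
    have := measure_union hd hUm (μ := ρ)
    rw [‹S ∪ U = Set.univ›, measure_univ] at this
    have h1 : (ρ S).toReal + (ρ U).toReal = 1 := by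
      rw [← ENNReal.toReal_add (measure_ne_top _ _) (measure_ne_top _ _), ← this]
      simp
    linarith
  have hbν : (ν U).toReal ≤ (μ U).toReal + (2 * c) * (2 * K) := by
    have h2 := ENNReal.toReal_mono
      (by exact ENNReal.add_ne_top.2 ⟨measure_ne_top _ _, ENNReal.ofReal_ne_top⟩) hνU
    rw [ENNReal.toReal_add (measure_ne_top _ _) ENNReal.ofReal_ne_top,
      ENNReal.toReal_ofReal (mul_nonneg (mul_nonneg (by norm_num) (Nat.cast_nonneg c)) (by linarith))] at h2
    exact h2
  have hδS : δ ≤ (μ S).toReal := by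
    have := heq T hT (hc ▸ hcard)
    rw [hset] at this
    exact (ENNReal.ofReal_le_iff_le_toReal hμSfin).1 this
  have hcj : (c : ℝ) ≤ (j : ℝ) := by exact_mod_cast hcard
  have hfinal : δ - 4 * j * K ≤ (ν S).toReal := by
    have h1 := hcompl μ
    have h2 := hcompl ν
    have h3 : (c : ℝ) * K ≤ (j : ℝ) * K := mul_le_mul_of_nonneg_right hcj hK0
    linarith
  rw [hset]
  exact ENNReal.ofReal_le_of_le_toReal hfinal
end

section
/- Let Λ be a multiset of n real points with Λ ⊂ ⋃_{i=1}^m [a_i, b_i], where a₁ ≤ b₁ < a₂ ≤ b₂ < ⋯ < a_m ≤ b_m. Let n_i = |Λ ∩ [a_i, b_i]| and let g = min_{1≤i≤m−1}(a_{i+1} − b_i). Then Λ is (k_j/n, g/2, j)-equidistributed, where k_j = min_S ∑_{i∈S^c} n_i and the minimum runs over all subsets S ⊆ {1,…,m} of size j. -/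
open MeasureTheory Polynomial Filter
open scoped ENNReal NNReal InnerProductSpace

/-- If the `n` points `lam` lie in `m` clusters `[a i, b i]` separated by gaps
of size at least `g > 0`, then `lam` is `(k_j/n, g/2, j)`-equidistributed, where `k_j` is the
least number of points outside any `j` of the clusters. -/
theorem clusters_equidistributed {n m : ℕ} (lam : Fin n → ℝ) (a b : Fin m → ℝ)
    (hab : ∀ i, a i ≤ b i)
    (hord : ∀ (i : Fin m) (h : (i : ℕ) + 1 < m), b i < a ⟨(i : ℕ) + 1, h⟩)
    (hcover : ∀ p, ∃ i, lam p ∈ Set.Icc (a i) (b i))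
    (g : ℝ) (hg : 0 < g)
    (hgap : ∀ (i : Fin m) (h : (i : ℕ) + 1 < m), g ≤ a ⟨(i : ℕ) + 1, h⟩ - b i)
    (j : ℕ) (hj : j ≤ m) (k : ℕ)
    (hk : ∀ S : Finset (Fin m), S.card = j →
      (k : ℝ) ≤ ∑ i ∈ Sᶜ,
        ((Finset.univ.filter fun p => lam p ∈ Set.Icc (a i) (b i)).card : ℝ)) :
    EquidistributedTuple n lam ((k : ℝ) / n) (g / 2) j := by
  classical
  intro T hTne hTcard
  set P : Fin m → Finset (Fin n) :=
    fun i => Finset.univ.filter fun p => lam p ∈ Set.Icc (a i) (b i) with hP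
  -- monotonicity across clusters
  have key : ∀ (q : ℕ) (hq : q < m) (i : Fin m), (i : ℕ) < q → b i + g ≤ a ⟨q, hq⟩ := by
    intro q
    induction q with
    | zero => intro hq i hi; omega
    | succ q ih =>
      intro hq i hi
      rcases Nat.lt_succ_iff_lt_or_eq.mp hi with h | h
      · have hqm : q < m := Nat.lt_of_succ_lt hq
        calc b i + g ≤ a ⟨q, hqm⟩ := ih hqm i h
          _ ≤ b ⟨q, hqm⟩ := hab _
          _ ≤ a ⟨q + 1, hq⟩ := le_of_lt (hord ⟨q, hqm⟩ hq)
      · have h1 : (i : ℕ) + 1 < m := by omega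
        have := hgap i h1
        have heq : (⟨(i : ℕ) + 1, h1⟩ : Fin m) = ⟨q + 1, hq⟩ := by
          simp only [Fin.mk.injEq]; omega
        rw [heq] at this
        linarith
  -- the set of clusters close to some point of T
  set Close : Fin m → Prop := fun i => ∃ t ∈ T, a i - g / 2 < t ∧ t < b i + g / 2 with hClose
  set S : Finset (Fin m) := Finset.univ.filter Close with hS
  -- uniqueness: each t is close to at most one cluster
  have uniq : ∀ (t : ℝ) (i₁ i₂ : Fin m),
      (a i₁ - g / 2 < t ∧ t < b i₁ + g / 2) → (a i₂ - g / 2 < t ∧ t < b i₂ + g / 2) →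
      i₁ = i₂ := by
    intro t i₁ i₂ h₁ h₂
    by_contra hne
    rcases lt_or_gt_of_ne (fun h => hne (Fin.ext h) : (i₁ : ℕ) ≠ (i₂ : ℕ)) with hlt | hlt
    · have := key (i₂ : ℕ) i₂.isLt i₁ hlt
      rw [Fin.eta] at this
      linarith [h₁.2, h₂.1]
    · have := key (i₁ : ℕ) i₁.isLt i₂ hlt
      rw [Fin.eta] at this
      linarith [h₂.2, h₁.1]
  -- S has at most |T| elements
  have hScard : S.card ≤ T.card := by
    have := Finset.card_le_card_of_injOn
      (f := fun i => if h : Close i then h.choose else 0)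
      (s := S) (t := T) ?_ ?_
    · exact this
    · intro i hi
      have hc : Close i := (Finset.mem_filter.mp hi).2
      simp only [dif_pos hc]
      exact hc.choose_spec.1
    · intro i₁ hi₁ i₂ hi₂ heq
      have hc₁ : Close i₁ := (Finset.mem_filter.mp (Finset.mem_coe.mp hi₁)).2
      have hc₂ : Close i₂ := (Finset.mem_filter.mp (Finset.mem_coe.mp hi₂)).2
      simp only [dif_pos hc₁, dif_pos hc₂] at heq
      have h₂' := hc₂.choose_spec.2
      rw [← heq] at h₂'
      exact uniq _ _ _ hc₁.choose_spec.2 h₂'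
  -- extend S to a set of size exactly j
  obtain ⟨S', hSS', -, hS'card⟩ :=
    Finset.exists_subsuperset_card_eq (Finset.subset_univ S)
      (le_trans hScard hTcard) (by simpa using hj)
  -- the good set
  set G : Finset (Fin n) :=
    Finset.univ.filter fun p => (g / 2) ^ T.card ≤ ∏ t ∈ T, |lam p - t| with hG
  -- each cluster outside S' is contained in G
  have hPG : ∀ i ∈ S'ᶜ, P i ⊆ G := by
    intro i hi p hp
    have hnotS : i ∉ S := fun h => (Finset.mem_compl.mp hi) (hSS' h)
    have hnotClose : ¬ Close i := fun h => hnotS (Finset.mem_filter.mpr ⟨Finset.mem_univ _, h⟩)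
    have hlam : lam p ∈ Set.Icc (a i) (b i) := (Finset.mem_filter.mp hp).2
    refine Finset.mem_filter.mpr ⟨Finset.mem_univ _, ?_⟩
    have hprod : ∀ t ∈ T, g / 2 ≤ |lam p - t| := by
      intro t ht
      have hfar : ¬ (a i - g / 2 < t ∧ t < b i + g / 2) := fun h => hnotClose ⟨t, ht, h⟩
      rcases not_and_or.mp hfar with h | h
      · push_neg at h
        have : g / 2 ≤ lam p - t := by linarith [hlam.1]
        exact le_trans this (le_abs_self _)
      · push_neg at h
        have : g / 2 ≤ -(lam p - t) := by linarith [hlam.2]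
        exact le_trans this (neg_le_abs _)
    calc (g / 2) ^ T.card = ∏ _t ∈ T, (g / 2) := (Finset.prod_const _).symm
      _ ≤ ∏ t ∈ T, |lam p - t| :=
        Finset.prod_le_prod (fun t _ => by linarith) hprod
  -- clusters are pairwise disjoint
  have hdisj : ∀ i₁ ∈ S'ᶜ, ∀ i₂ ∈ S'ᶜ, i₁ ≠ i₂ → Disjoint (P i₁) (P i₂) := by
    intro i₁ _ i₂ _ hne
    refine Finset.disjoint_left.mpr fun p hp₁ hp₂ => ?_
    have h₁ : lam p ∈ Set.Icc (a i₁) (b i₁) := (Finset.mem_filter.mp hp₁).2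
    have h₂ : lam p ∈ Set.Icc (a i₂) (b i₂) := (Finset.mem_filter.mp hp₂).2
    rcases lt_or_gt_of_ne (fun h => hne (Fin.ext h) : (i₁ : ℕ) ≠ (i₂ : ℕ)) with hlt | hlt
    · have := key (i₂ : ℕ) i₂.isLt i₁ hlt
      rw [Fin.eta] at this
      linarith [h₁.2, h₂.1]
    · have := key (i₁ : ℕ) i₁.isLt i₂ hlt
      rw [Fin.eta] at this
      linarith [h₂.2, h₁.1]
  -- counting
  have hsum : ∑ i ∈ S'ᶜ, ((P i).card : ℝ) ≤ (G.card : ℝ) := by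
    have hbu : (S'ᶜ.biUnion P).card = ∑ i ∈ S'ᶜ, (P i).card :=
      Finset.card_biUnion hdisj
    have hsub : S'ᶜ.biUnion P ⊆ G := by
      intro p hp
      obtain ⟨i, hi, hpi⟩ := Finset.mem_biUnion.mp hp
      exact hPG i hi hpi
    have := Finset.card_le_card hsub
    rw [hbu] at this
    exact_mod_cast this
  have hkG : (k : ℝ) ≤ (G.card : ℝ) := le_trans (hk S' hS'card) hsum
  -- conclude
  rcases Nat.eq_zero_or_pos n with hn | hn
  · subst hn
    simp
  · have : ((k : ℝ) / n) * n = (k : ℝ) := by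
      field_simp
    rw [this]
    exact hkG
end

section
/- Let A be an n×n real symmetric matrix with eigenvalues λ₁ ≥ ⋯ ≥ λ_n, let u be uniform on S^{n−1}, let μ^u = ∑_{i=1}^n u_i² δ_{λ_i} (coordinates in an orthonormal eigenbasis of A), and let μ_n = (1/n)∑_{i=1}^n δ_{λ_i}. Then for all sufficiently large n, P[Kol(μ^u, μ_n) ≥ n^{−1/4}] ≤ exp{−n^{1/4}/8}. -/
open MeasureTheory Polynomial Filter
open scoped ENNReal NNReal InnerProductSpace

noncomputable section
namespace SpecProof

variable {n : ℕ}

abbrev E (n : ℕ) := EuclideanSpace ℝ (Fin n)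

/-- helper: split a sum over `univ` at two distinct points -/
lemma sum_split {S : Finset (Fin n)} (f : Fin n → ℝ) {a b : Fin n} (ha : a ∈ S) (hb : b ∈ S)
    (hab : a ≠ b) :
    ∑ i ∈ S, f i = f a + f b + ∑ i ∈ (S.erase a).erase b, f i := by
  rw [← Finset.sum_erase_add _ _ ha, ← Finset.sum_erase_add _ _
    (Finset.mem_erase.2 ⟨hab.symm, hb⟩)]
  ring

def rotFun (a b : Fin n) (c s : ℝ) (v : E n) : E n :=
  WithLp.toLp 2 fun i => if i = a then c * v a + s * v b else if i = b then - s * v a + c * v b else v i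

lemma rotFun_apply_a (a b : Fin n) (c s : ℝ) (v : E n) :
    rotFun a b c s v a = c * v a + s * v b := by simp [rotFun]

lemma rotFun_apply_b {a b : Fin n} (hab : a ≠ b) (c s : ℝ) (v : E n) :
    rotFun a b c s v b = - s * v a + c * v b := by simp [rotFun, hab.symm]

lemma rotFun_apply_other {a b i : Fin n} (hia : i ≠ a) (hib : i ≠ b) (c s : ℝ) (v : E n) :
    rotFun a b c s v i = v i := by simp [rotFun, hia, hib]

def rotLin (a b : Fin n) (c s : ℝ) : E n →ₗ[ℝ] E n where
  toFun := rotFun a b c s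
  map_add' v w := by
    ext i
    simp only [rotFun, PiLp.add_apply, PiLp.toLp_apply]
    split_ifs <;> ring
  map_smul' r v := by
    ext i
    simp only [rotFun, PiLp.smul_apply, smul_eq_mul, RingHom.id_apply, PiLp.toLp_apply]
    split_ifs <;> ring

lemma rotLin_comp {a b : Fin n} (hab : a ≠ b) {c s : ℝ} (hcs : c ^ 2 + s ^ 2 = 1) :
    (rotLin a b c (-s)).comp (rotLin a b c s) = LinearMap.id := by
  apply LinearMap.ext
  intro v
  ext i
  show rotFun a b c (-s) (rotFun a b c s v) i = v i
  rcases eq_or_ne i a with rfl | hia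
  · rw [rotFun_apply_a, rotFun_apply_a, rotFun_apply_b hab]
    linear_combination v i * hcs
  rcases eq_or_ne i b with rfl | hib
  · rw [rotFun_apply_b hab, rotFun_apply_a, rotFun_apply_b hab]
    linear_combination v i * hcs
  · rw [rotFun_apply_other hia hib, rotFun_apply_other hia hib]

def rotLinEquiv {a b : Fin n} (hab : a ≠ b) {c s : ℝ} (hcs : c ^ 2 + s ^ 2 = 1) :
    E n ≃ₗ[ℝ] E n := by
  refine LinearEquiv.ofLinear (rotLin a b c s) (rotLin a b c (-s)) ?_ ?_
  · have h2 : c ^ 2 + (-s) ^ 2 = 1 := by rw [neg_pow]; simpa using hcs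
    have := rotLin_comp hab h2
    simpa using this
  · exact rotLin_comp hab hcs

/-- The Givens rotation as a linear isometry equivalence. -/
def rot {a b : Fin n} (hab : a ≠ b) {c s : ℝ} (hcs : c ^ 2 + s ^ 2 = 1) :
    E n ≃ₗᵢ[ℝ] E n := by
  refine LinearEquiv.isometryOfInner (rotLinEquiv hab hcs) ?_
  intro v w
  have key : ∀ x y : E n, (inner ℝ x y : ℝ) = ∑ i, x i * y i := by
    intro x y
    rw [PiLp.inner_apply]
    exact Finset.sum_congr rfl fun i _ => by simp [mul_comm]
  rw [key, key]
  show ∑ i, rotFun a b c s v i * rotFun a b c s w i = _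
  rw [sum_split (fun i => rotFun a b c s v i * rotFun a b c s w i) (Finset.mem_univ a)
    (Finset.mem_univ b) hab,
    sum_split (fun i => v i * w i) (Finset.mem_univ a) (Finset.mem_univ b) hab]
  have hrest : ∑ i ∈ (Finset.univ.erase a).erase b, rotFun a b c s v i * rotFun a b c s w i
      = ∑ i ∈ (Finset.univ.erase a).erase b, v i * w i := by
    apply Finset.sum_congr rfl
    intro i hi
    have hib : i ≠ b := (Finset.mem_erase.1 hi).1
    have hia : i ≠ a := (Finset.mem_erase.1 (Finset.mem_erase.1 hi).2).1
    rw [rotFun_apply_other hia hib, rotFun_apply_other hia hib]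
  rw [hrest, rotFun_apply_a, rotFun_apply_a, rotFun_apply_b hab, rotFun_apply_b hab]
  linear_combination (v a * w a + v b * w b) * hcs

lemma rot_apply_a {a b : Fin n} (hab : a ≠ b) {c s : ℝ} (hcs : c ^ 2 + s ^ 2 = 1) (v : E n) :
    rot hab hcs v a = c * v a + s * v b := rotFun_apply_a a b c s v

lemma rot_apply_b {a b : Fin n} (hab : a ≠ b) {c s : ℝ} (hcs : c ^ 2 + s ^ 2 = 1) (v : E n) :
    rot hab hcs v b = - s * v a + c * v b := rotFun_apply_b hab c s v

lemma rot_apply_other {a b i : Fin n} (hab : a ≠ b) (hia : i ≠ a) (hib : i ≠ b)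
    {c s : ℝ} (hcs : c ^ 2 + s ^ 2 = 1) (v : E n) :
    rot hab hcs v i = v i := rotFun_apply_other hia hib c s v

def XS (S : Finset (Fin n)) (v : E n) : ℝ := ∑ i ∈ S, v i ^ 2

lemma contCoord (i : Fin n) : Continuous fun v : E n => v i :=
  (EuclideanSpace.proj (𝕜 := ℝ) i).continuous

lemma contXS (S : Finset (Fin n)) : Continuous (XS S) :=
  continuous_finset_sum _ fun i _ => (contCoord i).pow 2

lemma XS_nonneg (S : Finset (Fin n)) (v : E n) : 0 ≤ XS S v :=
  Finset.sum_nonneg fun i _ => sq_nonneg _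

lemma sum_sq_eq_one {v : E n} (hv : ‖v‖ = 1) : ∑ i, v i ^ 2 = 1 := by
  have h := EuclideanSpace.norm_eq v
  rw [hv] at h
  have h2 : √(∑ i, ‖v i‖ ^ 2) = 1 := h.symm
  rw [Real.sqrt_eq_one] at h2
  simpa [Real.norm_eq_abs, sq_abs] using h2

lemma XS_le_one {v : E n} (hv : ‖v‖ = 1) (S : Finset (Fin n)) : XS S v ≤ 1 := by
  rw [← sum_sq_eq_one hv]
  exact Finset.sum_le_sum_of_subset_of_nonneg (Finset.subset_univ S)
    fun i _ _ => sq_nonneg _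

lemma coord_sq_le_one {v : E n} (hv : ‖v‖ = 1) (i : Fin n) : v i ^ 2 ≤ 1 := by
  rw [← sum_sq_eq_one hv]
  exact Finset.single_le_sum (fun j _ => sq_nonneg (v j)) (Finset.mem_univ i)

section MeasureCore

variable {σ : Measure (E n)}

lemma ae_sphere (hprob : IsProbabilityMeasure σ) (hsph : σ {u : E n | ‖u‖ = 1} = 1) :
    ∀ᵐ v ∂σ, ‖v‖ = 1 := by
  rw [ae_iff]
  have hm : MeasurableSet {u : E n | ‖u‖ = 1} :=
    (isClosed_eq continuous_norm continuous_const).measurableSet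
  have h := measure_compl hm (measure_ne_top σ _)
  rw [hsph, measure_univ] at h
  simpa [Set.compl_setOf] using h.trans (by simp)

lemma integ (hprob : IsProbabilityMeasure σ) (hsph : σ {u : E n | ‖u‖ = 1} = 1)
    {f : E n → ℝ} (hf : Continuous f) (hb : ∀ v : E n, ‖v‖ = 1 → |f v| ≤ 1) :
    Integrable f σ := by
  refine Integrable.mono' (integrable_const 1) hf.aestronglyMeasurable ?_
  filter_upwards [ae_sphere hprob hsph] with v hv
  simpa [Real.norm_eq_abs] using hb v hv

lemma inv_int (hinv : ∀ e : E n ≃ₗᵢ[ℝ] E n, σ.map e = σ) (e : E n ≃ₗᵢ[ℝ] E n)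
    {f : E n → ℝ} (hf : Continuous f) :
    ∫ v, f (e v) ∂σ = ∫ v, f v ∂σ := by
  conv_rhs => rw [← hinv e]
  rw [integral_map e.continuous.measurable.aemeasurable hf.aestronglyMeasurable]

end MeasureCore

section Moments

variable {σ : Measure (E n)}

lemma h01 : (0:ℝ) ^ 2 + (1:ℝ) ^ 2 = 1 := by norm_num

/-- coordinate swap (with a sign) as an isometry -/
def swapIso {a b : Fin n} (hab : a ≠ b) : E n ≃ₗᵢ[ℝ] E n := rot hab h01

lemma swapIso_apply_a {a b : Fin n} (hab : a ≠ b) (v : E n) :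
    swapIso hab v a = v b := by
  rw [swapIso, rot_apply_a]; ring

lemma swapIso_apply_b {a b : Fin n} (hab : a ≠ b) (v : E n) :
    swapIso hab v b = - v a := by
  rw [swapIso, rot_apply_b]; ring

lemma swapIso_apply_other {a b i : Fin n} (hab : a ≠ b) (hia : i ≠ a) (hib : i ≠ b) (v : E n) :
    swapIso hab v i = v i := by
  rw [swapIso, rot_apply_other hab hia hib]

lemma XS_swap_inside {S : Finset (Fin n)} {a b : Fin n} (hab : a ≠ b) (ha : a ∈ S)
    (hb : b ∈ S) (v : E n) : XS S (swapIso hab v) = XS S v := by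
  unfold XS
  rw [sum_split _ ha hb hab, sum_split _ ha hb hab]
  have h1 : ∑ i ∈ (S.erase a).erase b, swapIso hab v i ^ 2
      = ∑ i ∈ (S.erase a).erase b, v i ^ 2 := by
    apply Finset.sum_congr rfl
    intro i hi
    have hib : i ≠ b := (Finset.mem_erase.1 hi).1
    have hia : i ≠ a := (Finset.mem_erase.1 (Finset.mem_erase.1 hi).2).1
    rw [swapIso_apply_other hab hia hib]
  rw [h1, swapIso_apply_a hab, swapIso_apply_b hab]
  ring

lemma XS_swap_outside {S : Finset (Fin n)} {a b : Fin n} (hab : a ≠ b) (ha : a ∉ S)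
    (hb : b ∉ S) (v : E n) : XS S (swapIso hab v) = XS S v := by
  unfold XS
  apply Finset.sum_congr rfl
  intro i hi
  rw [swapIso_apply_other hab (fun h => ha (h ▸ hi)) (fun h => hb (h ▸ hi))]

-- boundedness helpers
lemma bnd0 {v : E n} (hv : ‖v‖ = 1) (S : Finset (Fin n)) (k : ℕ) : |XS S v ^ k| ≤ 1 := by
  rw [abs_of_nonneg (pow_nonneg (XS_nonneg S v) k)]
  exact pow_le_one₀ (XS_nonneg S v) (XS_le_one hv S)

lemma bnd1 {v : E n} (hv : ‖v‖ = 1) (i : Fin n) (S : Finset (Fin n)) (k : ℕ) :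
    |v i ^ 2 * XS S v ^ k| ≤ 1 := by
  rw [abs_mul]
  have h1 : |v i ^ 2| ≤ 1 := by rw [abs_of_nonneg (sq_nonneg _)]; exact coord_sq_le_one hv i
  exact mul_le_one₀ h1 (abs_nonneg _) (bnd0 hv S k)

lemma bnd2 {v : E n} (hv : ‖v‖ = 1) (i j : Fin n) (S : Finset (Fin n)) (k : ℕ) :
    |v i ^ 2 * (v j ^ 2 * XS S v ^ k)| ≤ 1 := by
  rw [abs_mul]
  have h1 : |v i ^ 2| ≤ 1 := by rw [abs_of_nonneg (sq_nonneg _)]; exact coord_sq_le_one hv i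
  exact mul_le_one₀ h1 (abs_nonneg _) (bnd1 hv j S k)

-- integrability helpers
lemma integX (hprob : IsProbabilityMeasure σ) (hsph : σ {u : E n | ‖u‖ = 1} = 1)
    (S : Finset (Fin n)) (k : ℕ) : Integrable (fun v => XS S v ^ k) σ :=
  integ hprob hsph ((contXS S).pow k) fun v hv => bnd0 hv S k

lemma integ1 (hprob : IsProbabilityMeasure σ) (hsph : σ {u : E n | ‖u‖ = 1} = 1)
    (i : Fin n) (S : Finset (Fin n)) (k : ℕ) :
    Integrable (fun v => v i ^ 2 * XS S v ^ k) σ :=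
  integ hprob hsph (((contCoord i).pow 2).mul ((contXS S).pow k)) fun v hv => bnd1 hv i S k

lemma integ2 (hprob : IsProbabilityMeasure σ) (hsph : σ {u : E n | ‖u‖ = 1} = 1)
    (i j : Fin n) (S : Finset (Fin n)) (k : ℕ) :
    Integrable (fun v => v i ^ 2 * (v j ^ 2 * XS S v ^ k)) σ :=
  integ hprob hsph (((contCoord i).pow 2).mul
    (((contCoord j).pow 2).mul ((contXS S).pow k))) fun v hv => bnd2 hv i j S k

-- symmetry of integrals
lemma int_sq_eq (hinv : ∀ e : E n ≃ₗᵢ[ℝ] E n, σ.map e = σ) {S : Finset (Fin n)}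
    {a a' : Fin n} (ha : a ∈ S) (ha' : a' ∈ S) (k : ℕ) :
    ∫ v, v a' ^ 2 * XS S v ^ k ∂σ = ∫ v, v a ^ 2 * XS S v ^ k ∂σ := by
  rcases eq_or_ne a a' with rfl | hab
  · rfl
  · have hcont : Continuous fun v : E n => v a ^ 2 * XS S v ^ k :=
      ((contCoord a).pow 2).mul ((contXS S).pow k)
    have h := inv_int hinv (swapIso hab) hcont
    rw [← h]
    apply integral_congr_ae
    filter_upwards with v
    rw [swapIso_apply_a hab, XS_swap_inside hab ha ha']

lemma int_sqsq_eq (hinv : ∀ e : E n ≃ₗᵢ[ℝ] E n, σ.map e = σ) {S : Finset (Fin n)}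
    {a b b' : Fin n} (ha : a ∈ S) (hb : b ∉ S) (hb' : b' ∉ S) (k : ℕ) :
    ∫ v, v a ^ 2 * (v b' ^ 2 * XS S v ^ k) ∂σ = ∫ v, v a ^ 2 * (v b ^ 2 * XS S v ^ k) ∂σ := by
  rcases eq_or_ne b b' with rfl | hbb
  · rfl
  · have hcont : Continuous fun v : E n => v a ^ 2 * (v b ^ 2 * XS S v ^ k) :=
      ((contCoord a).pow 2).mul (((contCoord b).pow 2).mul ((contXS S).pow k))
    have h := inv_int hinv (swapIso hbb) hcont
    rw [← h]
    apply integral_congr_ae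
    filter_upwards with v
    have hab : a ≠ b := fun h => hb (h ▸ ha)
    have hab' : a ≠ b' := fun h => hb' (h ▸ ha)
    rw [swapIso_apply_other hbb hab hab', swapIso_apply_a hbb,
      XS_swap_outside hbb hb hb']

lemma sumS (hprob : IsProbabilityMeasure σ) (hinv : ∀ e : E n ≃ₗᵢ[ℝ] E n, σ.map e = σ)
    (hsph : σ {u : E n | ‖u‖ = 1} = 1) {S : Finset (Fin n)} {a : Fin n} (ha : a ∈ S) (k : ℕ) :
    (S.card : ℝ) * ∫ v, v a ^ 2 * XS S v ^ k ∂σ = ∫ v, XS S v ^ (k + 1) ∂σ := by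
  have h1 : ∫ v, XS S v ^ (k + 1) ∂σ = ∑ a' ∈ S, ∫ v, v a' ^ 2 * XS S v ^ k ∂σ := by
    rw [← integral_finset_sum S (fun i _ => integ1 hprob hsph i S k)]
    apply integral_congr_ae
    filter_upwards with v
    rw [← Finset.sum_mul]
    rw [pow_succ, mul_comm (XS S v ^ k)]
    rfl
  rw [h1, Finset.sum_congr rfl (fun a' ha' => int_sq_eq hinv ha ha' k), Finset.sum_const,
    nsmul_eq_mul]

lemma L2 (hprob : IsProbabilityMeasure σ) (hinv : ∀ e : E n ≃ₗᵢ[ℝ] E n, σ.map e = σ)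
    (hsph : σ {u : E n | ‖u‖ = 1} = 1) {S : Finset (Fin n)} {b : Fin n} (hb : b ∉ S) (k : ℕ) :
    ∫ v, XS S v ^ k ∂σ = (∫ v, XS S v ^ (k + 1) ∂σ)
      + ((n : ℝ) - S.card) * ∫ v, v b ^ 2 * XS S v ^ k ∂σ := by
  have hdec : ∫ v, XS S v ^ k ∂σ
      = ∑ i ∈ S, (∫ v, v i ^ 2 * XS S v ^ k ∂σ) + ∑ i ∈ Sᶜ, ∫ v, v i ^ 2 * XS S v ^ k ∂σ := by
    rw [← integral_finset_sum S (fun i _ => integ1 hprob hsph i S k),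
      ← integral_finset_sum Sᶜ (fun i _ => integ1 hprob hsph i S k),
      ← integral_add (integrable_finset_sum S (fun i _ => integ1 hprob hsph i S k))
        (integrable_finset_sum Sᶜ (fun i _ => integ1 hprob hsph i S k))]
    apply integral_congr_ae
    filter_upwards [ae_sphere hprob hsph] with v hv
    have : ∑ i ∈ S, v i ^ 2 * XS S v ^ k + ∑ i ∈ Sᶜ, v i ^ 2 * XS S v ^ k
        = (∑ i, v i ^ 2) * XS S v ^ k := by
      rw [← Finset.sum_mul, ← Finset.sum_mul, ← add_mul, Finset.sum_add_sum_compl]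
    rw [this, sum_sq_eq_one hv, one_mul]
  have hS : ∑ i ∈ S, (∫ v, v i ^ 2 * XS S v ^ k ∂σ) = ∫ v, XS S v ^ (k + 1) ∂σ := by
    rcases Finset.eq_empty_or_nonempty S with rfl | ⟨a, ha⟩
    · simp [XS, zero_pow (Nat.succ_ne_zero k)]
    · rw [Finset.sum_congr rfl (fun a' ha' => int_sq_eq hinv ha ha' k), Finset.sum_const,
        nsmul_eq_mul]
      exact sumS hprob hinv hsph ha k
  have hSc : ∑ i ∈ Sᶜ, (∫ v, v i ^ 2 * XS S v ^ k ∂σ)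
      = ((n : ℝ) - S.card) * ∫ v, v b ^ 2 * XS S v ^ k ∂σ := by
    have hbc : b ∈ Sᶜ := Finset.mem_compl.2 hb
    have : ∀ b' ∈ Sᶜ, (∫ v, v b' ^ 2 * XS S v ^ k ∂σ) = ∫ v, v b ^ 2 * XS S v ^ k ∂σ := by
      intro b' hb'
      rcases eq_or_ne b b' with rfl | hbb
      · rfl
      · have hcont : Continuous fun v : E n => v b ^ 2 * XS S v ^ k :=
          ((contCoord b).pow 2).mul ((contXS S).pow k)
        rw [← inv_int hinv (swapIso hbb) hcont]
        apply integral_congr_ae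
        filter_upwards with v
        rw [swapIso_apply_a hbb, XS_swap_outside hbb hb (Finset.mem_compl.1 hb')]
    rw [Finset.sum_congr rfl this, Finset.sum_const, nsmul_eq_mul, Finset.card_compl,
      Fintype.card_fin, Nat.cast_sub (by simpa using Finset.card_le_univ S : S.card ≤ n)]
  rw [hdec, hS, hSc]

lemma L3 (hprob : IsProbabilityMeasure σ) (hinv : ∀ e : E n ≃ₗᵢ[ℝ] E n, σ.map e = σ)
    (hsph : σ {u : E n | ‖u‖ = 1} = 1) {S : Finset (Fin n)} {a b : Fin n} (ha : a ∈ S)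
    (hb : b ∉ S) (k : ℕ) :
    ((n : ℝ) - S.card) * ∫ v, v a ^ 2 * (v b ^ 2 * XS S v ^ k) ∂σ
      = (∫ v, v a ^ 2 * XS S v ^ k ∂σ) - ∫ v, v a ^ 2 * XS S v ^ (k + 1) ∂σ := by
  have hdec : ∫ v, v a ^ 2 * XS S v ^ k ∂σ
      = (∫ v, v a ^ 2 * XS S v ^ (k + 1) ∂σ)
        + ∑ i ∈ Sᶜ, ∫ v, v a ^ 2 * (v i ^ 2 * XS S v ^ k) ∂σ := by
    rw [← integral_finset_sum Sᶜ (fun i _ => integ2 hprob hsph a i S k),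
      ← integral_add (integ1 hprob hsph a S (k+1))
        (integrable_finset_sum Sᶜ (fun i _ => integ2 hprob hsph a i S k))]
    apply integral_congr_ae
    filter_upwards [ae_sphere hprob hsph] with v hv
    have h2 : XS S v + ∑ i ∈ Sᶜ, v i ^ 2 = 1 := by
      rw [← sum_sq_eq_one hv, XS, Finset.sum_add_sum_compl]
    rw [← Finset.mul_sum, ← Finset.sum_mul]
    linear_combination (-(v a ^ 2 * XS S v ^ k)) * h2
  have heach : ∀ b' ∈ Sᶜ, (∫ v, v a ^ 2 * (v b' ^ 2 * XS S v ^ k) ∂σ)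
      = ∫ v, v a ^ 2 * (v b ^ 2 * XS S v ^ k) ∂σ := fun b' hb' =>
    int_sqsq_eq hinv ha hb (Finset.mem_compl.1 hb') k
  rw [hdec, Finset.sum_congr rfl heach, Finset.sum_const, nsmul_eq_mul, Finset.card_compl,
    Fintype.card_fin, Nat.cast_sub (by simpa using Finset.card_le_univ S : S.card ≤ n)]
  ring


lemma two_mul_choose_two (l : ℕ) : 2 * l.choose 2 = l * (l - 1) := by
  rw [Nat.choose_two_right]
  rcases l with _ | m
  · simp
  · have h : Even ((m + 1) * m) := by simpa [mul_comm] using Nat.even_mul_succ_self m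
    rw [Nat.succ_sub_one, mul_comm]
    exact Nat.div_mul_cancel h.two_dvd

lemma even_add_pow (v z : ℝ) (l : ℕ) :
    (v + z) ^ l + (v - z) ^ l
      = ∑ t ∈ Finset.range (l + 1), 2 * (l.choose (2 * t) : ℝ) * z ^ (2 * t) * v ^ (l - 2 * t) := by
  have h1 : (v + z) ^ l = ∑ k ∈ Finset.range (l + 1), z ^ k * v ^ (l - k) * (l.choose k : ℝ) := by
    rw [add_comm]; exact add_pow z v l
  have h2 : (v - z) ^ l
      = ∑ k ∈ Finset.range (l + 1), (-1 : ℝ) ^ k * (z ^ k * v ^ (l - k) * (l.choose k : ℝ)) := by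
    rw [sub_eq_add_neg, add_comm, add_pow]
    apply Finset.sum_congr rfl
    intro k _
    rw [neg_pow]
    ring
  rw [h1, h2, ← Finset.sum_add_distrib]
  have h3 : ∀ k ∈ Finset.range (l + 1),
      z ^ k * v ^ (l - k) * (l.choose k : ℝ) + (-1:ℝ) ^ k * (z ^ k * v ^ (l - k) * (l.choose k : ℝ))
      = if Even k then 2 * (l.choose k : ℝ) * z ^ k * v ^ (l - k) else 0 := by
    intro k _
    rcases Nat.even_or_odd k with he | ho
    · rw [if_pos he, he.neg_one_pow]; ring
    · rw [if_neg (Nat.not_even_iff_odd.2 ho), ho.neg_one_pow]; ring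
  rw [Finset.sum_congr rfl h3, Finset.sum_ite, Finset.sum_const_zero, add_zero]
  have h4 : ∀ k ∈ (Finset.range (2 * l + 2)).filter (fun k => Even k),
      k ∉ (Finset.range (l + 1)).filter (fun k => Even k) →
      2 * (l.choose k : ℝ) * z ^ k * v ^ (l - k) = 0 := by
    intro k hk hk'
    simp only [Finset.mem_filter, Finset.mem_range] at hk hk'
    have : l < k := by
      by_contra hkl
      exact hk' ⟨by omega, hk.2⟩
    rw [Nat.choose_eq_zero_of_lt this]
    simp
  rw [Finset.sum_subset (by
    apply Finset.filter_subset_filter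
    intro x hx
    simp only [Finset.mem_range] at hx ⊢
    omega) h4]
  have h5 : (Finset.range (2 * l + 2)).filter (fun k => Even k)
      = (Finset.range (l + 1)).image (fun t => 2 * t) := by
    ext r
    simp only [Finset.mem_filter, Finset.mem_range, Finset.mem_image]
    constructor
    · rintro ⟨hr, s, hs⟩
      exact ⟨s, by omega, by omega⟩
    · rintro ⟨t, ht, rfl⟩
      exact ⟨by omega, t, by omega⟩
  rw [h5, Finset.sum_image (fun x _ y _ h => by omega)]


lemma abs_mul_le_one {x y : ℝ} (hx : |x| ≤ 1) (hy : |y| ≤ 1) : |x * y| ≤ 1 := by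
  rw [abs_mul]; exact mul_le_one₀ hx (abs_nonneg _) hy

lemma abs_pow_le_one {x : ℝ} (hx : |x| ≤ 1) (t : ℕ) : |x ^ t| ≤ 1 := by
  rw [abs_pow]; exact pow_le_one₀ (abs_nonneg x) hx

lemma bndG {v : E n} (hv : ‖v‖ = 1) (a b : Fin n) (S : Finset (Fin n)) (t i e : ℕ) :
    |(v a ^ 2 * v b ^ 2) ^ t * ((v b ^ 2 - v a ^ 2) ^ i * XS S v ^ e)| ≤ 1 := by
  have h1 : |v a ^ 2 * v b ^ 2| ≤ 1 := by
    apply abs_mul_le_one <;>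
      [skip; skip] <;>
      (rw [abs_of_nonneg (sq_nonneg _)]; exact coord_sq_le_one hv _)
  have h2 : |v b ^ 2 - v a ^ 2| ≤ 1 := by
    rw [abs_le]
    constructor
    · have := coord_sq_le_one hv a; have := sq_nonneg (v b); nlinarith
    · have := coord_sq_le_one hv b; have := sq_nonneg (v a); nlinarith
  exact abs_mul_le_one (abs_pow_le_one h1 t)
    (abs_mul_le_one (abs_pow_le_one h2 i) (bnd0 hv S e))

lemma integG (hprob : IsProbabilityMeasure σ) (hsph : σ {u : E n | ‖u‖ = 1} = 1)
    (a b : Fin n) (S : Finset (Fin n)) (t i e : ℕ) :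
    Integrable (fun v => (v a ^ 2 * v b ^ 2) ^ t * ((v b ^ 2 - v a ^ 2) ^ i * XS S v ^ e)) σ :=
  integ hprob hsph (((((contCoord a).pow 2).mul ((contCoord b).pow 2)).pow t).mul
    (((((contCoord b).pow 2).sub ((contCoord a).pow 2)).pow i).mul ((contXS S).pow e)))
    fun v hv => bndG hv a b S t i e

lemma termCoeff (c : ℝ) (t i : ℕ) :
    (Polynomial.C c * (Polynomial.X * (1 - Polynomial.X)) ^ t * Polynomial.X ^ i).coeff 1
      = if t + i = 1 then c else 0 := by
  have hrw : Polynomial.C c * (Polynomial.X * (1 - Polynomial.X)) ^ t * Polynomial.X ^ i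
      = (Polynomial.C c * (1 - Polynomial.X) ^ t) * Polynomial.X ^ (t + i) := by
    rw [mul_pow, pow_add]; ring
  rw [hrw, Polynomial.coeff_mul_X_pow']
  by_cases h1 : t + i = 1
  · rw [if_pos h1, if_pos (by omega), h1]
    rw [show (1:ℕ) - 1 = 0 from rfl, Polynomial.coeff_zero_eq_eval_zero]
    simp
  · rw [if_neg h1]
    split_ifs with h2
    · have ht : t = 0 := by omega
      have hi : i = 0 := by omega
      have h10 : (1 : ℕ) - (t + i) = 1 := by omega
      rw [h10, ht]
      simp
    · rfl

lemma L4 (hprob : IsProbabilityMeasure σ) (hinv : ∀ e : E n ≃ₗᵢ[ℝ] E n, σ.map e = σ)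
    (hsph : σ {u : E n | ‖u‖ = 1} = 1) {S : Finset (Fin n)} {a b : Fin n} (ha : a ∈ S)
    (hb : b ∉ S) (l : ℕ) :
    (l : ℝ) * (∫ v, (v b ^ 2 - v a ^ 2) ^ 1 * XS S v ^ (l - 1) ∂σ)
      + 4 * (l.choose 2 : ℝ) *
        ∫ v, (v a ^ 2 * v b ^ 2) * XS S v ^ (l - 2) ∂σ = 0 := by
  have hab : a ≠ b := fun h => hb (h ▸ ha)
  set Tl := ∫ v, XS S v ^ l ∂σ with hTl
  set G : ℕ → ℕ → ℝ := fun t i =>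
    ∫ v, (v a ^ 2 * v b ^ 2) ^ t * ((v b ^ 2 - v a ^ 2) ^ i * XS S v ^ (l - 2 * t - i)) ∂σ
    with hGdef
  set κ : ℕ → ℕ → ℝ := fun t i =>
    2 * (l.choose (2 * t) : ℝ) * ((l - 2 * t).choose i : ℝ) * 4 ^ t with hκdef
  have hsplit : ∀ w : E n, XS S w = w a ^ 2 + ∑ i ∈ S.erase a, w i ^ 2 := by
    intro w
    rw [XS, ← Finset.sum_erase_add _ _ ha]
    ring
  -- Step 1: the evaluation identity for all x ∈ (0,1)
  have key : ∀ x ∈ Set.Ioo (0:ℝ) 1,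
      2 * Tl = ∑ t ∈ Finset.range (l + 1), ∑ i ∈ Finset.range (l + 1),
        κ t i * G t i * (x * (1 - x)) ^ t * x ^ i := by
    rintro x ⟨hx0, hx1⟩
    set c := Real.sqrt (1 - x) with hcdef
    set s := Real.sqrt x with hsdef
    have hc2 : c ^ 2 = 1 - x := Real.sq_sqrt (by linarith)
    have hs2 : s ^ 2 = x := Real.sq_sqrt hx0.le
    have hcs : c ^ 2 + s ^ 2 = 1 := by rw [hc2, hs2]; ring
    have hcs' : c ^ 2 + (-s) ^ 2 = 1 := by rw [neg_pow]; simpa using hcs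
    -- pointwise identity
    have hpt : ∀ v : E n, XS S (rot hab hcs v) ^ l + XS S (rot hab hcs' v) ^ l
        = ∑ t ∈ Finset.range (l + 1), ∑ i ∈ Finset.range (l + 1),
          (κ t i * (x * (1 - x)) ^ t * x ^ i) *
            ((v a ^ 2 * v b ^ 2) ^ t *
              ((v b ^ 2 - v a ^ 2) ^ i * XS S v ^ (l - 2 * t - i))) := by
      intro v
      have hXrot : ∀ (s' : ℝ) (h2 : c ^ 2 + s' ^ 2 = 1),
          XS S (rot hab h2 v) = (c * v a + s' * v b) ^ 2 + ∑ i ∈ S.erase a, v i ^ 2 := by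
        intro s' h2
        rw [hsplit (rot hab h2 v), rot_apply_a]
        congr 1
        apply Finset.sum_congr rfl
        intro i hi
        have hia : i ≠ a := (Finset.mem_erase.1 hi).1
        have hib : i ≠ b := fun h => hb (h ▸ (Finset.mem_erase.1 hi).2)
        rw [rot_apply_other hab hia hib]
      have hXv : XS S v = v a ^ 2 + ∑ i ∈ S.erase a, v i ^ 2 := hsplit v
      set V : ℝ := x * (v b ^ 2 - v a ^ 2) + XS S v with hVdef
      set z : ℝ := 2 * c * s * (v a) * (v b) with hzdef
      have hv1 : (c * v a + s * v b) ^ 2 + ∑ i ∈ S.erase a, v i ^ 2 = V + z := by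
        rw [hVdef, hzdef]
        linear_combination (v a ^ 2) * hc2 + (v b ^ 2) * hs2 - hXv
      have hv2 : (c * v a + (-s) * v b) ^ 2 + ∑ i ∈ S.erase a, v i ^ 2 = V - z := by
        rw [hVdef, hzdef]
        linear_combination (v a ^ 2) * hc2 + (v b ^ 2) * hs2 - hXv
      rw [hXrot s hcs, hXrot (-s) hcs', hv1, hv2, even_add_pow V z l]
      apply Finset.sum_congr rfl
      intro t _
      have hzz : z ^ 2 = 4 * (x * (1 - x)) * (v a ^ 2 * v b ^ 2) := by
        rw [hzdef]
        linear_combination (4 * s ^ 2 * v a ^ 2 * v b ^ 2) * hc2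
          + (4 * (1 - x) * v a ^ 2 * v b ^ 2) * hs2
      have hVpow : V ^ (l - 2 * t)
          = ∑ i ∈ Finset.range (l + 1), (x * (v b ^ 2 - v a ^ 2)) ^ i
              * XS S v ^ (l - 2 * t - i) * ((l - 2 * t).choose i : ℝ) := by
        rw [hVdef, add_pow]
        apply Finset.sum_subset
        · intro i hi
          simp only [Finset.mem_range] at hi ⊢
          omega
        · intro i _ hi
          simp only [Finset.mem_range, not_lt] at hi
          rw [Nat.choose_eq_zero_of_lt (by omega)]
          simp
      rw [pow_mul, hzz, hVpow, Finset.mul_sum]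
      apply Finset.sum_congr rfl
      intro i _
      rw [hκdef, mul_pow (4 * (x * (1 - x))) (v a ^ 2 * v b ^ 2) t,
        mul_pow (4:ℝ) (x * (1 - x)) t, mul_pow x (v b ^ 2 - v a ^ 2) i]
      ring
    -- integrate the pointwise identity
    have hintrot : ∀ (s' : ℝ) (h2 : c ^ 2 + s' ^ 2 = 1),
        Integrable (fun v => XS S (rot hab h2 v) ^ l) σ := by
      intro s' h2
      apply integ hprob hsph (((contXS S).pow l).comp (rot hab h2).continuous)
      intro v hv
      have : ‖rot hab h2 v‖ = 1 := by rw [(rot hab h2).norm_map]; exact hv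
      exact bnd0 this S l
    have hTT : 2 * Tl
        = ∫ v, (XS S (rot hab hcs v) ^ l + XS S (rot hab hcs' v) ^ l) ∂σ := by
      rw [integral_add (hintrot s hcs) (hintrot (-s) hcs')]
      rw [inv_int (f := fun v => XS S v ^ l) hinv (rot hab hcs) ((contXS S).pow l),
        inv_int (f := fun v => XS S v ^ l) hinv (rot hab hcs') ((contXS S).pow l)]
      ring
    rw [hTT, integral_congr_ae (Filter.Eventually.of_forall hpt)]
    rw [integral_finset_sum _ (fun t _ => integrable_finset_sum _ (fun i _ =>
      ((integG hprob hsph a b S t i (l - 2 * t - i)).const_mul _)))]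
    apply Finset.sum_congr rfl
    intro t _
    rw [integral_finset_sum _ (fun i _ =>
      ((integG hprob hsph a b S t i (l - 2 * t - i)).const_mul _))]
    apply Finset.sum_congr rfl
    intro i _
    rw [integral_const_mul]
    rw [hGdef]
    ring
  -- Step 2: polynomial identity
  set p : Polynomial ℝ := (∑ t ∈ Finset.range (l + 1), ∑ i ∈ Finset.range (l + 1),
      Polynomial.C (κ t i * G t i) * (Polynomial.X * (1 - Polynomial.X)) ^ t
        * Polynomial.X ^ i) - Polynomial.C (2 * Tl) with hpdef
  have hroot : ∀ x ∈ Set.Ioo (0:ℝ) 1, p.IsRoot x := by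
    intro x hx
    have hk := key x hx
    show p.eval x = 0
    rw [hpdef]
    simp only [Polynomial.eval_sub, Polynomial.eval_finset_sum, Polynomial.eval_mul,
      Polynomial.eval_pow, Polynomial.eval_C, Polynomial.eval_X, Polynomial.eval_one]
    rw [sub_eq_zero, ← hk]
  have hp0 : p = 0 := Polynomial.eq_zero_of_infinite_isRoot p
    ((Set.Ioo_infinite (by norm_num : (0:ℝ) < 1)).mono hroot)
  have hc1 : p.coeff 1 = 0 := by rw [hp0]; simp
  rw [hpdef, Polynomial.coeff_sub] at hc1
  simp only [Polynomial.finset_sum_coeff, termCoeff, Polynomial.coeff_C] at hc1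
  -- evaluate the double sum of ifs
  rcases Nat.eq_zero_or_pos l with rfl | hl
  · simp
  have hsum : ∑ t ∈ Finset.range (l + 1), ∑ i ∈ Finset.range (l + 1),
      (if t + i = 1 then κ t i * G t i else 0)
      = κ 0 1 * G 0 1 + κ 1 0 * G 1 0 := by
    have hinner : ∀ t ∈ Finset.range (l + 1),
        (∑ i ∈ Finset.range (l + 1), if t + i = 1 then κ t i * G t i else 0)
        = (if t = 0 then κ 0 1 * G 0 1 else 0) + (if t = 1 then κ 1 0 * G 1 0 else 0) := by
      intro t _
      match t with
      | 0 =>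
        simp only [zero_add]
        rw [Finset.sum_ite_eq' (Finset.range (l + 1)) 1 (fun i => κ 0 i * G 0 i)]
        have h11 : 1 < l + 1 := by omega
        simp [Finset.mem_range, h11]
      | 1 =>
        have hcong : ∀ i ∈ Finset.range (l + 1),
            (if 1 + i = 1 then κ 1 i * G 1 i else 0) = (if i = 0 then κ 1 i * G 1 i else 0) := by
          intro i _
          by_cases h : i = 0
          · subst h; simp
          · rw [if_neg (by omega), if_neg h]
        rw [Finset.sum_congr rfl hcong,
          Finset.sum_ite_eq' (Finset.range (l + 1)) 0 (fun i => κ 1 i * G 1 i)]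
        simp [Finset.mem_range]
      | (t + 2) =>
        rw [Finset.sum_eq_zero (fun i _ => if_neg (by omega))]
        have h2 : t + 2 ≠ 0 := by omega
        have h3 : t + 2 ≠ 1 := by omega
        simp [h2, h3]
    rw [Finset.sum_congr rfl hinner, Finset.sum_add_distrib,
      Finset.sum_ite_eq' (Finset.range (l + 1)) 0 (fun _ => κ 0 1 * G 0 1),
      Finset.sum_ite_eq' (Finset.range (l + 1)) 1 (fun _ => κ 1 0 * G 1 0)]
    have h11 : 1 < l + 1 := by omega
    simp [Finset.mem_range, h11]
  rw [hsum] at hc1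
  have hG01 : G 0 1 = ∫ v, (v b ^ 2 - v a ^ 2) ^ 1 * XS S v ^ (l - 1) ∂σ := by
    rw [hGdef]
    apply integral_congr_ae
    filter_upwards with v
    norm_num
  have hG10 : G 1 0 = ∫ v, (v a ^ 2 * v b ^ 2) * XS S v ^ (l - 2) ∂σ := by
    rw [hGdef]
    apply integral_congr_ae
    filter_upwards with v
    norm_num
  have hκ01 : κ 0 1 = 2 * l := by
    rw [hκdef]
    norm_num [Nat.choose_one_right]
  have hκ10 : κ 1 0 = 8 * (l.choose 2 : ℝ) := by
    rw [hκdef]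
    norm_num
    ring
  rw [hκ01, hκ10, hG01, hG10] at hc1
  have h0 : (if (1:ℕ) = 0 then 2 * Tl else 0) = 0 := by norm_num
  rw [h0, sub_zero] at hc1
  linarith


lemma L3mul (hprob : IsProbabilityMeasure σ) (hinv : ∀ e : E n ≃ₗᵢ[ℝ] E n, σ.map e = σ)
    (hsph : σ {u : E n | ‖u‖ = 1} = 1) {S : Finset (Fin n)} {a b : Fin n} (ha : a ∈ S)
    (hb : b ∉ S) (k : ℕ) :
    2 * ((k : ℝ) + 1) * k * (((n : ℝ) - S.card) * ∫ v, v a ^ 2 * (v b ^ 2 * XS S v ^ (k - 1)) ∂σ)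
      = 2 * ((k : ℝ) + 1) * k *
        ((∫ v, v a ^ 2 * XS S v ^ (k - 1) ∂σ) - ∫ v, v a ^ 2 * XS S v ^ k ∂σ) := by
  cases k with
  | zero => norm_num
  | succ j =>
    have hL3 := L3 hprob hinv hsph ha hb j
    have hjj : j + 1 - 1 = j := by omega
    rw [hjj]
    push_cast
    linear_combination (2 * ((j : ℝ) + 1 + 1) * ((j : ℝ) + 1)) * hL3

lemma sumSmul (hprob : IsProbabilityMeasure σ) (hinv : ∀ e : E n ≃ₗᵢ[ℝ] E n, σ.map e = σ)
    (hsph : σ {u : E n | ‖u‖ = 1} = 1) {S : Finset (Fin n)} {a : Fin n} (ha : a ∈ S) (k : ℕ) :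
    2 * ((k : ℝ) + 1) * k * ((S.card : ℝ) * ∫ v, v a ^ 2 * XS S v ^ (k - 1) ∂σ)
      = 2 * ((k : ℝ) + 1) * k * ∫ v, XS S v ^ k ∂σ := by
  cases k with
  | zero => norm_num
  | succ j =>
    have hS := sumS hprob hinv hsph ha j
    have hjj : j + 1 - 1 = j := by omega
    rw [hjj]
    push_cast
    linear_combination (2 * ((j : ℝ) + 1 + 1) * ((j : ℝ) + 1)) * hS

lemma recursion (hprob : IsProbabilityMeasure σ) (hinv : ∀ e : E n ≃ₗᵢ[ℝ] E n, σ.map e = σ)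
    (hsph : σ {u : E n | ‖u‖ = 1} = 1) {S : Finset (Fin n)} {a b : Fin n} (ha : a ∈ S)
    (hb : b ∉ S) (k : ℕ) :
    ((S.card : ℝ) + 2 * k) * ∫ v, XS S v ^ k ∂σ
      = ((n : ℝ) + 2 * k) * ∫ v, XS S v ^ (k + 1) ∂σ := by
  set m : ℝ := (S.card : ℝ) with hm
  set Tk := ∫ v, XS S v ^ k ∂σ
  set Tk1 := ∫ v, XS S v ^ (k + 1) ∂σ
  set Qk := ∫ v, v a ^ 2 * XS S v ^ k ∂σ
  set Qkm := ∫ v, v a ^ 2 * XS S v ^ (k - 1) ∂σ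
  set P2 := ∫ v, v b ^ 2 * XS S v ^ k ∂σ
  set P3 := ∫ v, v a ^ 2 * (v b ^ 2 * XS S v ^ (k - 1)) ∂σ
  have h3 : m * Qk = Tk1 := sumS hprob hinv hsph ha k
  have h5 : Tk = Tk1 + ((n : ℝ) - m) * P2 := L2 hprob hinv hsph hb k
  have hL4 := L4 hprob hinv hsph ha hb (k + 1)
  have hP3form : ∫ v, (v a ^ 2 * v b ^ 2) * XS S v ^ (k + 1 - 2) ∂σ = P3 := by
    have hkk : k + 1 - 2 = k - 1 := by omega
    rw [hkk]
    apply integral_congr_ae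
    filter_upwards with v
    ring
  have hsubf : ∫ v, (v b ^ 2 - v a ^ 2) ^ 1 * XS S v ^ (k + 1 - 1) ∂σ = P2 - Qk := by
    have hkk : k + 1 - 1 = k := by omega
    rw [hkk, show (fun v : E n => (v b ^ 2 - v a ^ 2) ^ 1 * XS S v ^ k)
      = fun v : E n => v b ^ 2 * XS S v ^ k - v a ^ 2 * XS S v ^ k from funext fun v => by ring]
    exact integral_sub (integ1 hprob hsph b S k) (integ1 hprob hsph a S k)
  have hchoose : (4 : ℝ) * ((k + 1).choose 2 : ℝ) = 2 * ((k : ℝ) + 1) * k := by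
    have h := two_mul_choose_two (k + 1)
    rw [Nat.add_sub_cancel] at h
    have h' := congrArg (Nat.cast : ℕ → ℝ) h
    push_cast at h'
    linarith
  have h1 : ((k : ℝ) + 1) * (P2 - Qk) + 2 * ((k : ℝ) + 1) * k * P3 = 0 := by
    rw [hsubf, hP3form] at hL4
    push_cast at hL4
    linear_combination hL4 - P3 * hchoose
  have h2 : 2 * ((k : ℝ) + 1) * k * (((n : ℝ) - m) * P3)
      = 2 * ((k : ℝ) + 1) * k * (Qkm - Qk) := L3mul hprob hinv hsph ha hb k
  have h4 : 2 * ((k : ℝ) + 1) * k * (m * Qkm) = 2 * ((k : ℝ) + 1) * k * Tk :=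
    sumSmul hprob hinv hsph ha k
  have hfinal : ((k : ℝ) + 1) * ((m + 2 * k) * Tk - ((n : ℝ) + 2 * k) * Tk1) = 0 := by
    linear_combination (m * ((n : ℝ) - m)) * h1 - m * h2
      + (((k : ℝ) + 1) * ((n : ℝ) - m) + 2 * ((k : ℝ) + 1) * k) * h3 - h4 + (((k : ℝ) + 1) * m) * h5
  have hk1 : ((k : ℝ) + 1) ≠ 0 := by positivity
  have := mul_eq_zero.1 hfinal
  rcases this with h | h
  · exact absurd h hk1
  · linarith

lemma moment (hprob : IsProbabilityMeasure σ) (hinv : ∀ e : E n ≃ₗᵢ[ℝ] E n, σ.map e = σ)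
    (hsph : σ {u : E n | ‖u‖ = 1} = 1) {S : Finset (Fin n)} {a b : Fin n} (ha : a ∈ S)
    (hb : b ∉ S) (k : ℕ) :
    ∫ v, XS S v ^ k ∂σ
      = ∏ j ∈ Finset.range k, (((S.card : ℝ) + 2 * j) / ((n : ℝ) + 2 * j)) := by
  induction k with
  | zero =>
    haveI := hprob
    simp
  | succ k ih =>
    have hrec := recursion hprob hinv hsph ha hb k
    have hnpos : (0 : ℝ) < (n : ℝ) + 2 * k := by
      have : 0 < n := a.pos
      have : (1 : ℝ) ≤ (n : ℝ) := by exact_mod_cast this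
      positivity
    rw [Finset.prod_range_succ, ← ih]
    field_simp
    linarith [hrec]


lemma tail_bound (hprob : IsProbabilityMeasure σ) (hinv : ∀ e : E n ≃ₗᵢ[ℝ] E n, σ.map e = σ)
    (hsph : σ {u : E n | ‖u‖ = 1} = 1) {S : Finset (Fin n)} {a b : Fin n} (ha : a ∈ S)
    (hb : b ∉ S) (k : ℕ) {q : ℝ} (hq : 0 < q) :
    σ {v : E n | q ≤ XS S v} ≤ ENNReal.ofReal
      ((∏ j ∈ Finset.range k, (((S.card : ℝ) + 2 * j) / ((n : ℝ) + 2 * j))) / q ^ k) := by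
  haveI := hprob
  have hsub : {v : E n | q ≤ XS S v} ⊆ {v : E n | q ^ k ≤ XS S v ^ k} :=
    fun v hv => pow_le_pow_left₀ hq.le hv k
  refine le_trans (measure_mono hsub) ?_
  have hnn : 0 ≤ᵐ[σ] fun v => XS S v ^ k :=
    Filter.Eventually.of_forall fun v => pow_nonneg (XS_nonneg S v) k
  have hμ := mul_meas_ge_le_integral_of_nonneg hnn (integX hprob hsph S k) (q ^ k)
  rw [moment hprob hinv hsph ha hb k] at hμ
  have hqk : 0 < q ^ k := pow_pos hq k
  have h1 : (σ {v : E n | q ^ k ≤ XS S v ^ k}).toReal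
      ≤ (∏ j ∈ Finset.range k, (((S.card : ℝ) + 2 * j) / ((n : ℝ) + 2 * j))) / q ^ k := by
    rw [le_div_iff₀ hqk]
    rw [measureReal_def] at hμ
    linarith
  calc σ {v : E n | q ^ k ≤ XS S v ^ k}
      = ENNReal.ofReal ((σ {v : E n | q ^ k ≤ XS S v ^ k}).toReal) :=
        (ENNReal.ofReal_toReal (measure_ne_top _ _)).symm
    _ ≤ _ := ENNReal.ofReal_le_ofReal h1


lemma per_set_bound (hprob : IsProbabilityMeasure σ) (hinv : ∀ e : E n ≃ₗᵢ[ℝ] E n, σ.map e = σ)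
    (hsph : σ {u : E n | ‖u‖ = 1} = 1) {S : Finset (Fin n)} (hS : S.Nonempty)
    (hSne : S ≠ Finset.univ) (k : ℕ) {δ : ℝ} (hδ : 0 < δ)
    (hmn : (S.card : ℝ) ≤ (1 - δ) * n) (hk : 2 * (k : ℝ) ≤ δ * n / 2) :
    σ {v : E n | (S.card : ℝ) / n + δ ≤ XS S v}
      ≤ ENNReal.ofReal (Real.exp (-(δ / 2) * k)) := by
  obtain ⟨a, ha⟩ := hS
  obtain ⟨b, hb⟩ : ∃ b, b ∉ S := by
    by_contra h
    push_neg at h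
    exact hSne (Finset.eq_univ_iff_forall.2 h)
  have hn : (0 : ℝ) < n := by exact_mod_cast a.pos
  set m := (S.card : ℝ) with hmdef
  have hm0 : (0 : ℝ) < m := by
    rw [hmdef]
    exact_mod_cast Finset.card_pos.2 ⟨a, ha⟩
  set q := m / n + δ with hqdef
  have hq : 0 < q := by positivity
  refine le_trans (tail_bound hprob hinv hsph ha hb k hq) ?_
  apply ENNReal.ofReal_le_ofReal
  set ρ := (m + 2 * k) / (m + δ * n) with hρdef
  have hmδn : 0 < m + δ * n := by positivity
  have hnq : (n : ℝ) * q = m + δ * n := by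
    rw [hqdef]
    field_simp
  have h1 : (∏ j ∈ Finset.range k, ((m + 2 * j) / ((n : ℝ) + 2 * j))) / q ^ k
      = ∏ j ∈ Finset.range k, ((m + 2 * j) / (((n : ℝ) + 2 * j) * q)) := by
    conv_rhs => rw [Finset.prod_congr rfl (fun j (_ : j ∈ Finset.range k) =>
        div_mul_eq_div_div (m + 2 * (j:ℝ)) ((n : ℝ) + 2 * j) q),
      Finset.prod_div_distrib, Finset.prod_const, Finset.card_range]
  have h2 : ∀ j ∈ Finset.range k, (m + 2 * (j:ℝ)) / (((n : ℝ) + 2 * j) * q) ≤ ρ := by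
    intro j hj
    have hjk : (j : ℝ) ≤ k := by
      have := Finset.mem_range.1 hj
      exact_mod_cast this.le
    apply div_le_div₀ (by positivity) (by linarith) hmδn
    nlinarith [hq, hjk]
  have h3 : (∏ j ∈ Finset.range k, ((m + 2 * j) / ((n : ℝ) + 2 * j))) / q ^ k ≤ ρ ^ k := by
    rw [h1]
    calc ∏ j ∈ Finset.range k, ((m + 2 * j) / (((n : ℝ) + 2 * j) * q))
        ≤ ∏ _j ∈ Finset.range k, ρ := by
          apply Finset.prod_le_prod
          · intro j _
            have : (0:ℝ) < ((n : ℝ) + 2 * j) * q := by positivity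
            positivity
          · exact h2
      _ = ρ ^ k := by rw [Finset.prod_const, Finset.card_range]
  have hδ1 : δ < 1 := by nlinarith
  have hρle : ρ ≤ 1 - δ / 2 := by
    rw [hρdef, div_le_iff₀ hmδn]
    nlinarith
  have hρ0 : 0 ≤ ρ := by positivity
  have h4 : ρ ^ k ≤ (1 - δ / 2) ^ k := pow_le_pow_left₀ hρ0 hρle k
  have h5 : (1 - δ / 2) ^ k ≤ Real.exp (-(δ / 2)) ^ k := by
    apply pow_le_pow_left₀ (by linarith)
    linarith [Real.add_one_le_exp (-(δ / 2))]
  rw [← Real.exp_nat_mul] at h5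
  have h6 : ((k : ℝ)) * (-(δ / 2)) = -(δ / 2) * k := by ring
  rw [h6] at h5
  linarith

end Moments
section CDF

lemma vsm_cdf (lam : Fin n → ℝ) (w : Fin n → ℝ) (t : ℝ) :
    ((vectorSpectralMeasure n lam w) (Set.Iic t)).toReal
      = ∑ i ∈ Finset.univ.filter (fun i => lam i ≤ t), (w i) ^ 2 := by
  rw [vectorSpectralMeasure, Measure.finset_sum_apply]
  have hterm : ∀ i : Fin n, (ENNReal.ofReal ((w i) ^ 2) • Measure.dirac (lam i)) (Set.Iic t)
      = if lam i ≤ t then ENNReal.ofReal ((w i) ^ 2) else 0 := by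
    intro i
    rw [Measure.smul_apply, smul_eq_mul, Measure.dirac_apply' _ measurableSet_Iic]
    rw [Set.indicator_apply]
    simp only [Set.mem_Iic, Pi.one_apply]
    split_ifs <;> simp
  rw [Finset.sum_congr rfl (fun i _ => hterm i)]
  rw [ENNReal.toReal_sum (fun i _ => by split_ifs <;> simp)]
  have hterm2 : ∀ a : Fin n, (if lam a ≤ t then ENNReal.ofReal ((w a) ^ 2) else 0).toReal
      = if lam a ≤ t then (w a) ^ 2 else 0 := by
    intro a
    split_ifs <;> simp [ENNReal.toReal_ofReal (sq_nonneg _)]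
  rw [Finset.sum_congr rfl (fun i _ => hterm2 i), ← Finset.sum_filter]

lemma esd_cdf (hn : 0 < n) (lam : Fin n → ℝ) (t : ℝ) :
    ((esd n lam) (Set.Iic t)).toReal
      = ((Finset.univ.filter (fun i => lam i ≤ t)).card : ℝ) / n := by
  rw [esd, Measure.smul_apply, smul_eq_mul, Measure.finset_sum_apply]
  have hterm : ∀ i : Fin n, (Measure.dirac (lam i)) (Set.Iic t)
      = if lam i ≤ t then (1 : ℝ≥0∞) else 0 := by
    intro i
    rw [Measure.dirac_apply' _ measurableSet_Iic, Set.indicator_apply]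
    simp [Set.mem_Iic]
  rw [Finset.sum_congr rfl (fun i _ => hterm i), Finset.sum_boole]
  rw [ENNReal.toReal_mul, ENNReal.toReal_inv]
  simp only [ENNReal.toReal_natCast]
  rw [inv_mul_eq_div]

end CDF

section KolEvent

lemma kol_event {lam : Fin n → ℝ} {v : E n} (hv : ‖v‖ = 1) {ε : ℝ} (hε : 0 < ε)
    (hn : 0 < n)
    (h : ε ≤ kolDist (vectorSpectralMeasure n lam (fun i => v i)) (esd n lam)) :
    ∃ j : Fin n, ε / 2 ≤ |XS (Finset.univ.filter (fun i => lam i ≤ lam j)) v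
      - ((Finset.univ.filter (fun i => lam i ≤ lam j)).card : ℝ) / n| := by
  rw [kolDist] at h
  have h2 : ε / 2 < ⨆ t : ℝ, |((vectorSpectralMeasure n lam (fun i => v i)) (Set.Iic t)).toReal
      - ((esd n lam) (Set.Iic t)).toReal| := lt_of_lt_of_le (by linarith) h
  obtain ⟨t, ht⟩ := exists_lt_of_lt_ciSup h2
  rw [vsm_cdf, esd_cdf hn] at ht
  set St := Finset.univ.filter (fun i => lam i ≤ t) with hSt
  have hne : St.Nonempty := by
    by_contra hemp
    rw [Finset.not_nonempty_iff_eq_empty] at hemp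
    rw [hemp] at ht
    simp at ht
    linarith
  obtain ⟨j, hjS, hjmax⟩ := Finset.exists_max_image St lam hne
  have hSeq : St = Finset.univ.filter (fun i => lam i ≤ lam j) := by
    ext i
    simp only [hSt, Finset.mem_filter, Finset.mem_univ, true_and]
    constructor
    · intro hi
      exact hjmax i (by simp [hSt, hi])
    · intro hi
      exact le_trans hi (by simpa [hSt] using hjS)
  refine ⟨j, ?_⟩
  rw [← hSeq]
  have : ∑ i ∈ St, v i ^ 2 = XS St v := rfl
  rw [this] at ht
  linarith

end KolEvent

section Final

variable {σ : Measure (E n)}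

lemma U_bound (hprob : IsProbabilityMeasure σ) (hinv : ∀ e : E n ≃ₗᵢ[ℝ] E n, σ.map e = σ)
    (hsph : σ {u : E n | ‖u‖ = 1} = 1) (S : Finset (Fin n)) {δ : ℝ} (hδ : 0 < δ) (k : ℕ)
    (hk : 2 * (k : ℝ) ≤ δ * n / 2) :
    σ {v : E n | (S.card : ℝ) / n + δ ≤ XS S v} ≤ ENNReal.ofReal (Real.exp (-(δ / 2) * k)) := by
  have hzero : σ {v : E n | ¬ (‖v‖ = 1)} = 0 := by
    have := ae_sphere hprob hsph
    rwa [ae_iff] at this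
  by_cases hmn : (S.card : ℝ) ≤ (1 - δ) * n
  · rcases Finset.eq_empty_or_nonempty S with rfl | hne
    · have hempty : {v : E n | ((∅ : Finset (Fin n)).card : ℝ) / n + δ ≤ XS ∅ v} = ∅ := by
        ext v
        simp only [Finset.card_empty, Nat.cast_zero, zero_div, zero_add, Set.mem_setOf_eq,
          Set.mem_empty_iff_false, iff_false, not_le, XS, Finset.sum_empty]
        exact hδ
      rw [hempty]
      simp
    · have hn0 : 0 < n := by
        obtain ⟨a, _⟩ := hne
        exact a.pos
      have hSne : S ≠ Finset.univ := by
        intro h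
        rw [h, Finset.card_univ, Fintype.card_fin] at hmn
        have hnr : (0 : ℝ) < n := by exact_mod_cast hn0
        nlinarith
      exact per_set_bound hprob hinv hsph hne hSne k hδ hmn hk
  · push_neg at hmn
    have hn0 : 0 < n := by
      rcases Nat.eq_zero_or_pos n with rfl | h
      · exfalso
        have : S.card = 0 := by
          have := Finset.card_le_univ S
          simpa using this
        rw [this] at hmn
        norm_num at hmn
      · exact h
    have hnr : (0 : ℝ) < n := by exact_mod_cast hn0
    have hsub : {v : E n | (S.card : ℝ) / n + δ ≤ XS S v} ⊆ {v : E n | ¬ (‖v‖ = 1)} := by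
      intro v hv hv1
      have h1 := XS_le_one hv1 S
      have h2 : (1 : ℝ) - δ < (S.card : ℝ) / n := by
        rw [lt_div_iff₀ hnr]
        linarith
      have h3 : (1 : ℝ) < (S.card : ℝ) / n + δ := by linarith
      rw [Set.mem_setOf_eq] at hv
      linarith
    refine le_trans (measure_mono hsub) ?_
    rw [hzero]
    exact zero_le

lemma numeric_bound {y : ℝ} (hy : 265 ≤ y) (k : ℕ) (hk : y ^ 3 / 16 ≤ (k : ℝ)) :
    2 * y ^ 4 * Real.exp (-(1 / (2 * y) / 2) * k) ≤ Real.exp (-y / 8) := by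
  have hy0 : (0 : ℝ) < y := by linarith
  have h1 : y ^ 2 / 64 ≤ (1 / (2 * y) / 2) * k := by
    have : (1 / (2 * y) / 2) * (y ^ 3 / 16) ≤ (1 / (2 * y) / 2) * k := by
      apply mul_le_mul_of_nonneg_left hk
      positivity
    calc y ^ 2 / 64 = (1 / (2 * y) / 2) * (y ^ 3 / 16) := by field_simp; ring
      _ ≤ _ := this
  have h2 : Real.exp (-(1 / (2 * y) / 2) * k) ≤ Real.exp (-(y ^ 2 / 64)) := by
    apply Real.exp_le_exp.2
    linarith
  have h3 : 2 * y ^ 4 ≤ Real.exp (4 * y - 3) := by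
    have hpos : (0 : ℝ) < 2 * y ^ 4 := by positivity
    rw [← Real.log_le_iff_le_exp hpos]
    have hl2 : Real.log 2 ≤ 1 := by linarith [Real.log_le_sub_one_of_pos (by norm_num : (0:ℝ) < 2)]
    have hly : Real.log y ≤ y - 1 := Real.log_le_sub_one_of_pos hy0
    have : Real.log (2 * y ^ 4) = Real.log 2 + 4 * Real.log y := by
      rw [Real.log_mul (by norm_num) (by positivity), Real.log_pow]
      push_cast
      ring
    rw [this]
    linarith
  calc 2 * y ^ 4 * Real.exp (-(1 / (2 * y) / 2) * k)
      ≤ Real.exp (4 * y - 3) * Real.exp (-(y ^ 2 / 64)) := by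
        apply mul_le_mul h3 h2 (Real.exp_nonneg _) (Real.exp_nonneg _)
    _ = Real.exp (4 * y - 3 - y ^ 2 / 64) := by rw [← Real.exp_add]; ring_nf
    _ ≤ Real.exp (-y / 8) := by
        apply Real.exp_le_exp.2
        nlinarith [sq_nonneg (y - 265)]

end Final

theorem main :
    ∃ N : ℕ, ∀ n, N ≤ n → ∀ A : Matrix (Fin n) (Fin n) ℝ, ∀ hA : A.IsHermitian,
      ∀ σ : Measure (EuclideanSpace ℝ (Fin n)), IsUniformOnSphere σ →
        σ {u | (n : ℝ) ^ (-(1 / 4 : ℝ)) ≤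
            kolDist
              (vectorSpectralMeasure n hA.eigenvalues fun i => hA.eigenvectorBasis.repr u i)
              (esd n hA.eigenvalues)} ≤
          ENNReal.ofReal (Real.exp (-(n : ℝ) ^ ((1 : ℝ) / 4) / 8)) := by
  classical
  use 265 ^ 4
  intro n hn A hA σ hσ
  obtain ⟨hprob, hsph, hinv⟩ := hσ
  haveI := hprob
  have hn0 : 0 < n := lt_of_lt_of_le (by positivity) hn
  have hnr : (0 : ℝ) < n := by exact_mod_cast hn0
  set lam : Fin n → ℝ := hA.eigenvalues with hlam
  set e : EuclideanSpace ℝ (Fin n) ≃ₗᵢ[ℝ] EuclideanSpace ℝ (Fin n) := hA.eigenvectorBasis.repr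
    with he
  set y : ℝ := (n : ℝ) ^ ((1 : ℝ) / 4) with hy
  have hy0 : 0 < y := Real.rpow_pos_of_pos hnr _
  have h265 : (265 : ℝ) ≤ y := by
    have h1 : ((265 ^ 4 : ℕ) : ℝ) ≤ (n : ℝ) := by exact_mod_cast hn
    have h2 : ((265 ^ 4 : ℕ) : ℝ) ^ ((1 : ℝ) / 4) ≤ y :=
      Real.rpow_le_rpow (by positivity) h1 (by norm_num)
    have h3 : ((265 ^ 4 : ℕ) : ℝ) ^ ((1 : ℝ) / 4) = 265 := by
      have hc : ((265 ^ 4 : ℕ) : ℝ) = (265 : ℝ) ^ (4 : ℕ) := by norm_num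
      rw [hc, ← Real.rpow_natCast (265 : ℝ) 4, ← Real.rpow_mul (by norm_num)]
      norm_num
    linarith [h3 ▸ h2]
  have hny : (n : ℝ) = y ^ 4 := by
    rw [hy, ← Real.rpow_natCast ((n : ℝ) ^ ((1 : ℝ) / 4)) 4,
      ← Real.rpow_mul (Nat.cast_nonneg n)]
    norm_num
  have hεy : (n : ℝ) ^ (-(1 / 4 : ℝ)) = 1 / y := by
    rw [Real.rpow_neg (Nat.cast_nonneg n), ← hy]
    exact (one_div y).symm
  set δ : ℝ := 1 / (2 * y) with hδdef
  have hδ0 : 0 < δ := by positivity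
  set k : ℕ := ⌊y ^ 3 / 8⌋₊ with hkdef
  have hkle : (k : ℝ) ≤ y ^ 3 / 8 := Nat.floor_le (by positivity)
  have hkge : y ^ 3 / 16 ≤ (k : ℝ) := by
    have h1 := Nat.sub_one_lt_floor (y ^ 3 / 8)
    have ha : (265 : ℝ) * 265 ≤ y * y := by nlinarith
    have hb : (265 : ℝ) * 265 * 265 ≤ y * y * y := by nlinarith
    have h16 : (16 : ℝ) ≤ y ^ 3 := by nlinarith
    rw [← hkdef] at h1
    linarith
  have hkcond : 2 * (k : ℝ) ≤ δ * n / 2 := by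
    have hδn : δ * n = y ^ 3 / 2 := by
      rw [hδdef, hny]
      field_simp
    rw [hδn]
    linarith
  set B : ℝ≥0∞ := ENNReal.ofReal (Real.exp (-(δ / 2) * k)) with hB
  set Nsph : Set (EuclideanSpace ℝ (Fin n)) := {v | ¬ (‖v‖ = 1)} with hNsph
  set U : Finset (Fin n) → Set (EuclideanSpace ℝ (Fin n)) :=
    fun S => {v | (S.card : ℝ) / n + δ ≤ XS S v} with hUdef
  have hUmeas : ∀ S : Finset (Fin n), MeasurableSet (U S) := fun S =>
    (isClosed_le continuous_const (contXS S)).measurableSet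
  have hzero : σ Nsph = 0 := by
    have := ae_sphere hprob hsph
    rwa [ae_iff] at this
  -- inclusion of the event
  have hincl : {u : EuclideanSpace ℝ (Fin n) | (n : ℝ) ^ (-(1 / 4 : ℝ)) ≤
        kolDist (vectorSpectralMeasure n lam fun i => e u i) (esd n lam)}
      ⊆ e ⁻¹' (Nsph ∪ ⋃ j : Fin n,
          (U (Finset.univ.filter (fun i => lam i ≤ lam j))
            ∪ U ((Finset.univ.filter (fun i => lam i ≤ lam j))ᶜ))) := by
    intro u hu
    rw [Set.mem_setOf_eq] at hu
    rw [Set.mem_preimage]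
    by_cases hv : ‖e u‖ = 1
    · refine Set.mem_union_right _ ?_
      have hεpos : 0 < (n : ℝ) ^ (-(1 / 4 : ℝ)) := Real.rpow_pos_of_pos hnr _
      obtain ⟨j, hj⟩ := kol_event hv hεpos hn0 hu
      refine Set.mem_iUnion.2 ⟨j, ?_⟩
      set S := Finset.univ.filter (fun i => lam i ≤ lam j) with hS
      have hδε : δ ≤ (n : ℝ) ^ (-(1 / 4 : ℝ)) / 2 := by
        rw [hεy, hδdef]
        apply le_of_eq
        ring
      have hj2 : δ ≤ |XS S (e u) - (S.card : ℝ) / n| := le_trans hδε hj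
      rcases le_abs.1 hj2 with hcase | hcase
      · refine Set.mem_union_left _ ?_
        rw [hUdef]
        show (S.card : ℝ) / n + δ ≤ XS S (e u)
        linarith
      · refine Set.mem_union_right _ ?_
        rw [hUdef]
        show ((Sᶜ).card : ℝ) / n + δ ≤ XS (Sᶜ) (e u)
        have hsum := sum_sq_eq_one hv
        have hXc : XS S (e u) + XS (Sᶜ) (e u) = 1 := by
          rw [XS, XS, Finset.sum_add_sum_compl, hsum]
        have hcard : ((Sᶜ).card : ℝ) = (n : ℝ) - S.card := by
          rw [Finset.card_compl, Fintype.card_fin,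
            Nat.cast_sub (by simpa using Finset.card_le_univ S)]
        have hfrac : ((n : ℝ) - S.card) / n = 1 - (S.card : ℝ) / n := by
          field_simp
        rw [hcard, hfrac]
        linarith
    · exact Set.mem_union_left _ hv
  -- measure estimate
  have hpre : ∀ S : Finset (Fin n), σ (e ⁻¹' U S) = σ (U S) := by
    intro S
    rw [← Measure.map_apply e.continuous.measurable (hUmeas S), hinv e]
  have hpreN : σ (e ⁻¹' Nsph) = 0 := by
    have hNeq : e ⁻¹' Nsph = Nsph := by
      ext u
      simp only [hNsph, Set.mem_preimage, Set.mem_setOf_eq, e.norm_map]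
    rw [hNeq, hzero]
  have hUB : ∀ S : Finset (Fin n), σ (U S) ≤ B := fun S =>
    U_bound hprob hinv hsph S hδ0 k hkcond
  calc σ {u : EuclideanSpace ℝ (Fin n) | (n : ℝ) ^ (-(1 / 4 : ℝ)) ≤
        kolDist (vectorSpectralMeasure n lam fun i => e u i) (esd n lam)}
      ≤ σ (e ⁻¹' (Nsph ∪ ⋃ j : Fin n,
          (U (Finset.univ.filter (fun i => lam i ≤ lam j))
            ∪ U ((Finset.univ.filter (fun i => lam i ≤ lam j))ᶜ)))) := measure_mono hincl
    _ ≤ σ (e ⁻¹' Nsph) + σ (e ⁻¹' ⋃ j : Fin n,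
          (U (Finset.univ.filter (fun i => lam i ≤ lam j))
            ∪ U ((Finset.univ.filter (fun i => lam i ≤ lam j))ᶜ))) := by
        rw [Set.preimage_union]
        exact measure_union_le _ _
    _ ≤ 0 + ∑' j : Fin n, σ (e ⁻¹'
          (U (Finset.univ.filter (fun i => lam i ≤ lam j))
            ∪ U ((Finset.univ.filter (fun i => lam i ≤ lam j))ᶜ))) := by
        rw [hpreN, Set.preimage_iUnion]
        exact add_le_add le_rfl (measure_iUnion_le _)
    _ ≤ 0 + ∑' _j : Fin n, (B + B) := by
        refine add_le_add le_rfl (ENNReal.tsum_le_tsum fun j => ?_)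
        rw [Set.preimage_union]
        refine le_trans (measure_union_le _ _) ?_
        rw [hpre, hpre]
        exact add_le_add (hUB _) (hUB _)
    _ = (n : ℝ≥0∞) * (B + B) := by
        rw [zero_add, tsum_fintype]
        simp only [Finset.sum_const, Finset.card_univ, Fintype.card_fin, nsmul_eq_mul]
    _ ≤ ENNReal.ofReal (Real.exp (-(n : ℝ) ^ ((1 : ℝ) / 4) / 8)) := by
        rw [hB, ← ENNReal.ofReal_add (Real.exp_nonneg _) (Real.exp_nonneg _),
          ← ENNReal.ofReal_natCast n, ← ENNReal.ofReal_mul (Nat.cast_nonneg n)]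
        apply ENNReal.ofReal_le_ofReal
        have hnum := numeric_bound h265 k hkge
        calc (n : ℝ) * (Real.exp (-(δ / 2) * k) + Real.exp (-(δ / 2) * k))
            = 2 * y ^ 4 * Real.exp (-(1 / (2 * y) / 2) * k) := by
              rw [hny, hδdef]
              ring
          _ ≤ Real.exp (-y / 8) := hnum
          _ = Real.exp (-(n : ℝ) ^ ((1 : ℝ) / 4) / 8) := by rw [hy]

end SpecProof
end

/-- For `u` uniform on `S^{n-1}`, the random spectral measure
`μ^u = ∑ u_i² δ_{λ_i}` (coordinates taken in an orthonormal eigenbasis of `A`) is within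
Kolmogorov distance `n^{-1/4}` of the empirical spectral distribution, except with probability
at most `exp{−n^{1/4}/8}`, for all sufficiently large `n`. -/
theorem spectralMeasure_close_to_esd :
    ∃ N : ℕ, ∀ n, N ≤ n → ∀ A : Matrix (Fin n) (Fin n) ℝ, ∀ hA : A.IsHermitian,
      ∀ σ : Measure (EuclideanSpace ℝ (Fin n)), IsUniformOnSphere σ →
        σ {u | (n : ℝ) ^ (-(1 / 4 : ℝ)) ≤
            kolDist
              (vectorSpectralMeasure n hA.eigenvalues fun i => hA.eigenvectorBasis.repr u i)
              (esd n hA.eigenvalues)} ≤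
          ENNReal.ofReal (Real.exp (-(n : ℝ) ^ ((1 : ℝ) / 4) / 8)) :=
  SpecProof.main
end
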